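/- arXiv:2110.02656 — 5 statements merged into one kernel-verified Lean document; each statement's English description precedes it below -/
import Mathlib

section
/- Let G be a finite connected simple graph on n ≥ 2 vertices and let λ_n be the largest eigenvalue of its Laplacian matrix L. Then for any two distinct vertices u and v, the biharmonic distance satisfies d_B(u,v) ≥ √2 / λ_n. -/
open Matrix Finset

lemma pinv_unique {V : Type*} [Fintype V] [DecidableEq V] (L B C : Matrix V V ℝ)
    (hB1 : L * B * L = L) (hB2 : B * L * B = B)
    (hB3 : (L * B)ᵀ = L * B) (hB4 : (B * L)ᵀ = B * L)
    (hC1 : L * C * L = L) (hC3 : (L * C)ᵀ = L * C) (hC4 : (C * L)ᵀ = C * L)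
    (hC2 : C * L * C = C) : B = C := by
  have hLB : L * B = L * C := by
    calc L * B = (L * B)ᵀ := hB3.symm
    _ = Bᵀ * (L * C * L)ᵀ := by rw [hC1, Matrix.transpose_mul]
    _ = Bᵀ * (Lᵀ * (L * C)ᵀ) := by simp [Matrix.transpose_mul, Matrix.mul_assoc]
    _ = (L * B)ᵀ * (L * C)ᵀ := by simp [Matrix.transpose_mul, Matrix.mul_assoc]
    _ = (L * B) * (L * C) := by rw [hB3, hC3]
    _ = (L * B * L) * C := by simp [Matrix.mul_assoc]
    _ = L * C := by rw [hB1]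
  have hBL : B * L = C * L := by
    calc B * L = (B * L)ᵀ := hB4.symm
    _ = (L * C * L)ᵀ * Bᵀ := by rw [hC1, Matrix.transpose_mul]
    _ = ((C * L)ᵀ * Lᵀ) * Bᵀ := by simp [Matrix.transpose_mul, Matrix.mul_assoc]
    _ = (C * L)ᵀ * (B * L)ᵀ := by simp [Matrix.transpose_mul, Matrix.mul_assoc]
    _ = (C * L) * (B * L) := by rw [hB4, hC4]
    _ = C * (L * B * L) := by simp [Matrix.mul_assoc]
    _ = C * L := by rw [hB1]
  calc B = B * L * B := hB2.symm
  _ = C * L * B := by rw [hBL]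
  _ = C * (L * B) := by rw [Matrix.mul_assoc]
  _ = C * (L * C) := by rw [hLB]
  _ = C := by rw [← Matrix.mul_assoc, hC2]

/-- **Statement 1.** For a connected graph on `n ≥ 2` vertices with Laplacian
eigenvalues `0 = lam 0 < lam 1 ≤ … ≤ lam (n-1)` (listed increasingly, realized
by an orthonormal eigenbasis `z`), the biharmonic distance between any two
distinct vertices is at least `√2 / λ_n`. -/
theorem biharmonic_distance_ge_sqrt_two_div_lambda_n
    {V : Type*} [Fintype V] [DecidableEq V] {n : ℕ}
    (G : SimpleGraph V) [DecidableRel G.Adj] (hG : G.Connected)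
    (hn : Fintype.card V = n) (hn2 : 2 ≤ n)
    (Lp : Matrix V V ℝ)
    (hp1 : G.lapMatrix ℝ * Lp * G.lapMatrix ℝ = G.lapMatrix ℝ)
    (hp2 : Lp * G.lapMatrix ℝ * Lp = Lp)
    (hp3 : (G.lapMatrix ℝ * Lp)ᵀ = G.lapMatrix ℝ * Lp)
    (hp4 : (Lp * G.lapMatrix ℝ)ᵀ = Lp * G.lapMatrix ℝ)
    (lam : Fin n → ℝ) (z : Fin n → V → ℝ)
    (horth : ∀ i j, ∑ w, z i w * z j w = if i = j then 1 else 0)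
    (heig : ∀ k, G.lapMatrix ℝ *ᵥ z k = lam k • z k)
    (hmono : Monotone lam)
    (h0 : lam ⟨0, by omega⟩ = 0)
    (h2pos : 0 < lam ⟨1, by omega⟩)
    (u v : V) (huv : u ≠ v) :
    Real.sqrt 2 / lam ⟨n - 1, by omega⟩
      ≤ Real.sqrt ((Lp * Lp) u u + (Lp * Lp) v v - 2 * (Lp * Lp) u v) := by
  set L : Matrix V V ℝ := G.lapMatrix ℝ with hLdef
  set k0 : Fin n := ⟨0, by omega⟩
  set k1 : Fin n := ⟨1, by omega⟩
  set kn : Fin n := ⟨n - 1, by omega⟩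
  have hLsym : Lᵀ = L := G.isSymm_lapMatrix (R := ℝ)
  have hLs : ∀ a b, L a b = L b a := fun a b => by
    simpa using (congrFun (congrFun hLsym a) b).symm
  -- symmetry of Lp
  have hpsym : Lpᵀ = Lp := by
    refine pinv_unique L Lpᵀ Lp ?_ ?_ ?_ ?_ hp1 hp3 hp4 hp2
    · have := congrArg Matrix.transpose hp1
      rw [Matrix.transpose_mul, Matrix.transpose_mul, hLsym] at this
      rw [← Matrix.mul_assoc] at this; exact this
    · have := congrArg Matrix.transpose hp2
      rw [Matrix.transpose_mul, Matrix.transpose_mul, hLsym] at this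
      rw [← Matrix.mul_assoc] at this; exact this
    · have h : L * Lpᵀ = (Lp * L)ᵀ := by rw [Matrix.transpose_mul, hLsym]
      rw [h, Matrix.transpose_transpose, hp4]
    · have h : Lpᵀ * L = (L * Lp)ᵀ := by rw [Matrix.transpose_mul, hLsym]
      rw [h, Matrix.transpose_transpose, hp3]
  have hpsym' : ∀ a b, Lp a b = Lp b a := fun a b => by
    simpa using (congrFun (congrFun hpsym a) b).symm
  -- completeness relation
  have e : V ≃ Fin n := Fintype.equivFinOfCardEq hn
  set N : Matrix V (Fin n) ℝ := fun w k => z k w with hN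
  have hNN : Nᵀ * N = 1 := by
    ext i j
    rw [Matrix.mul_apply]
    simp only [Matrix.transpose_apply]
    simp [Matrix.mul_apply, Matrix.transpose_apply, hN, Matrix.one_apply, horth i j]
  have hNN' : N * Nᵀ = 1 := (Matrix.mul_eq_one_comm_of_equiv e).mpr hNN
  have hcomp : ∀ a b : V, (∑ k, z k a * z k b) = if a = b then 1 else 0 := by
    intro a b
    have := congrFun (congrFun hNN' a) b
    rw [Matrix.mul_apply] at this
    simp only [Matrix.transpose_apply] at this
    simpa [Matrix.mul_apply, Matrix.transpose_apply, hN, Matrix.one_apply] using this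
  -- expansion of an arbitrary vector
  have hexp : ∀ (f : V → ℝ) (a : V), ∑ k, (∑ w, z k w * f w) * z k a = f a := by
    intro f a
    calc ∑ k, (∑ w, z k w * f w) * z k a
        = ∑ k, ∑ w, (z k w * f w) * z k a := by
          simp [Finset.sum_mul]
      _ = ∑ w, ∑ k, (z k w * f w) * z k a := Finset.sum_comm
      _ = ∑ w, f w * ∑ k, z k w * z k a := by
          refine Finset.sum_congr rfl fun w _ => ?_
          rw [Finset.mul_sum]; refine Finset.sum_congr rfl fun k _ => by ring
      _ = f a := by simp [hcomp, mul_ite]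
  -- Parseval
  have hpars : ∀ f : V → ℝ, ∑ w, (f w) ^ 2 = ∑ k, (∑ w, z k w * f w) ^ 2 := by
    intro f
    calc ∑ w, f w ^ 2 = ∑ w, (∑ k, (∑ w', z k w' * f w') * z k w) * f w := by
          refine Finset.sum_congr rfl fun w _ => ?_
          rw [hexp f w]; ring
      _ = ∑ k, ∑ w, ((∑ w', z k w' * f w') * z k w) * f w := by
          rw [Finset.sum_comm]
          exact Finset.sum_congr rfl fun w _ => by simp [Finset.sum_mul]
      _ = ∑ k, (∑ w', z k w' * f w') ^ 2 := by
          refine Finset.sum_congr rfl fun k _ => ?_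
          rw [sq, Finset.mul_sum]
          refine Finset.sum_congr rfl fun w _ => by ring
  -- eigenvalue facts
  have hlamnonneg : ∀ k, 0 ≤ lam k := fun k => h0 ▸ hmono (by exact Fin.mk_le_of_le_val (by omega))
  have hlamle : ∀ k, lam k ≤ lam kn := fun k => hmono (by
    have := k.isLt
    exact Fin.le_def.mpr (by simp [kn]; omega))
  have hlnpos : 0 < lam kn := lt_of_lt_of_le h2pos (hmono (Fin.le_def.mpr (by simp [k1, kn]; omega)))
  have hlampos : ∀ k, k ≠ k0 → 0 < lam k := by
    intro k hk
    refine lt_of_lt_of_le h2pos (hmono (Fin.le_def.mpr ?_))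
    have : k.val ≠ 0 := fun h => hk (Fin.ext h)
    simp [k1]; omega
  -- the vector x = e_u - e_v and its coefficients
  set x : V → ℝ := fun w => (if w = u then (1:ℝ) else 0) - (if w = v then 1 else 0) with hx
  set c : Fin n → ℝ := fun k => ∑ w, z k w * x w with hc
  -- z k0 is constant
  have hker : L *ᵥ z k0 = 0 := by rw [heig k0, h0, zero_smul]
  have hconst : ∀ a b, z k0 a = z k0 b := by
    have h := (G.lapMatrix_mulVec_eq_zero_iff_forall_reachable (x := z k0)).mp
      hker
    exact fun a b => h a b (hG.preconnected a b)
  have hc0 : c k0 = 0 := by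
    have : c k0 = z k0 u - z k0 v := by
      simp [hc, hx, mul_sub, mul_ite, Finset.sum_sub_distrib, Finset.sum_ite_eq']
    rw [this, hconst u v, sub_self]
  -- x is in the range of L
  set dcoef : Fin n → ℝ := fun k => if k = k0 then 0 else c k / lam k with hdcoef
  set y : V → ℝ := fun w => ∑ k, dcoef k * z k w with hy
  have heig' : ∀ k a, ∑ b, L a b * z k b = lam k * z k a := by
    intro k a
    have := congrFun (heig k) a
    simpa [Matrix.mulVec, dotProduct] using this
  have hLy : L *ᵥ y = x := by
    funext a
    calc (L *ᵥ y) a = ∑ b, L a b * ∑ k, dcoef k * z k b := by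
          simp [Matrix.mulVec, dotProduct, hy]
      _ = ∑ b, ∑ k, dcoef k * (L a b * z k b) := by
          refine Finset.sum_congr rfl fun b _ => ?_
          rw [Finset.mul_sum]; exact Finset.sum_congr rfl fun k _ => by ring
      _ = ∑ k, ∑ b, dcoef k * (L a b * z k b) := Finset.sum_comm
      _ = ∑ k, dcoef k * (lam k * z k a) := by
          refine Finset.sum_congr rfl fun k _ => ?_
          rw [← Finset.mul_sum, ← heig' k a]
      _ = ∑ k, c k * z k a := by
          refine Finset.sum_congr rfl fun k _ => ?_
          by_cases hk : k = k0
          · subst hk; simp [hdcoef, hc0]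
          · have hne := (hlampos k hk).ne'
            simp only [hdcoef, hk, if_false]
            field_simp
      _ = x a := hexp x a
  -- g = Lp x, L g = x
  set g : V → ℝ := fun w => Lp w u - Lp w v with hg
  have hgx : Lp *ᵥ x = g := by
    funext w
    simp [Matrix.mulVec, dotProduct, hx, hg, mul_sub, mul_ite,
      Finset.sum_sub_distrib, Finset.sum_ite_eq']
  have hLg : L *ᵥ g = x := by
    rw [← hgx, ← hLy, Matrix.mulVec_mulVec, Matrix.mulVec_mulVec, hp1]
  set d : Fin n → ℝ := fun k => ∑ w, z k w * g w with hd
  -- c k = lam k * d k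
  have hcd : ∀ k, c k = lam k * d k := by
    intro k
    calc c k = ∑ w, z k w * ∑ b, L w b * g b := by
          rw [hc]; refine Finset.sum_congr rfl fun w _ => ?_
          rw [← hLg]; simp [Matrix.mulVec, dotProduct]
      _ = ∑ w, ∑ b, (z k w * L b w) * g b := by
          refine Finset.sum_congr rfl fun w _ => ?_
          rw [Finset.mul_sum]
          exact Finset.sum_congr rfl fun b _ => by rw [hLs w b]; ring
      _ = ∑ b, (∑ w, L b w * z k w) * g b := by
          rw [Finset.sum_comm]
          exact Finset.sum_congr rfl fun b _ => by rw [Finset.sum_mul]; exact Finset.sum_congr rfl fun w _ => by ring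
      _ = ∑ b, (lam k * z k b) * g b := by
          refine Finset.sum_congr rfl fun b _ => ?_
          rw [heig' k b]
      _ = lam k * d k := by
          rw [hd, Finset.mul_sum]
          exact Finset.sum_congr rfl fun b _ => by ring
  -- norms
  have hxnorm : ∑ w, (x w) ^ 2 = 2 := by
    have hterm : ∀ w, (x w) ^ 2 = (if w = u then (1:ℝ) else 0) + (if w = v then 1 else 0) := by
      intro w
      by_cases h1 : w = u <;> by_cases h2 : w = v
      · exact absurd (h1.symm.trans h2) huv
      all_goals simp [hx, h1, h2, huv, Ne.symm huv]
    rw [Finset.sum_congr rfl fun w _ => hterm w, Finset.sum_add_distrib]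
    simp
    norm_num
  -- main estimate
  have hQ2 : 2 ≤ lam kn ^ 2 * ∑ w, (g w) ^ 2 := by
    have h1 : ∑ k, (c k) ^ 2 ≤ lam kn ^ 2 * ∑ k, (d k) ^ 2 := by
      rw [Finset.mul_sum]
      refine Finset.sum_le_sum fun k _ => ?_
      rw [hcd k, mul_pow]
      exact mul_le_mul_of_nonneg_right
        (pow_le_pow_left₀ (hlamnonneg k) (hlamle k) 2) (sq_nonneg _)
    calc (2:ℝ) = ∑ w, (x w) ^ 2 := hxnorm.symm
      _ = ∑ k, (c k) ^ 2 := hpars x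
      _ ≤ lam kn ^ 2 * ∑ k, (d k) ^ 2 := h1
      _ = lam kn ^ 2 * ∑ w, (g w) ^ 2 := by rw [← hpars g]
  have hQform : (Lp * Lp) u u + (Lp * Lp) v v - 2 * (Lp * Lp) u v = ∑ w, (g w) ^ 2 := by
    simp only [Matrix.mul_apply, Finset.mul_sum, ← Finset.sum_add_distrib,
      ← Finset.sum_sub_distrib]
    refine Finset.sum_congr rfl fun w _ => ?_
    rw [hg, hpsym' u w, hpsym' v w]
    ring
  rw [hQform]
  have hfrac : 2 / lam kn ^ 2 ≤ ∑ w, (g w) ^ 2 := by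
    rw [div_le_iff₀ (by positivity)]
    linarith [hQ2]
  calc Real.sqrt 2 / lam kn = Real.sqrt (2 / lam kn ^ 2) := by
        rw [Real.sqrt_div (by norm_num), Real.sqrt_sq hlnpos.le]
    _ ≤ Real.sqrt (∑ w, (g w) ^ 2) := Real.sqrt_le_sqrt hfrac
end

section
/- Let G be a finite connected simple graph and let u, v be distinct non-adjacent vertices of G. Let G+e be the graph obtained from G by adding the edge e = {u,v}. Then B(G+e) < B(G), i.e., adding an edge strictly decreases the biharmonic index. -/
open Matrix Finset

private lemma mul_vecMulVec' {V : Type*} [Fintype V] (M : Matrix V V ℝ) (x z : V → ℝ) :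
    M * vecMulVec x z = vecMulVec (M *ᵥ x) z := by
  ext i j
  simp only [Matrix.mul_apply, vecMulVec_apply, Matrix.mulVec, dotProduct]
  rw [Finset.sum_mul]
  exact Finset.sum_congr rfl fun k _ => by ring

private lemma vecMulVec_mul' {V : Type*} [Fintype V] (x z : V → ℝ) (M : Matrix V V ℝ) :
    vecMulVec x z * M = vecMulVec x (z ᵥ* M) := by
  ext i j
  simp only [Matrix.mul_apply, vecMulVec_apply, Matrix.vecMul, dotProduct]
  rw [Finset.mul_sum]
  exact Finset.sum_congr rfl fun k _ => by ring

private lemma vecMulVec_mul_vecMulVec' {V : Type*} [Fintype V] (x z w t : V → ℝ) :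
    vecMulVec x z * vecMulVec w t = (z ⬝ᵥ w) • vecMulVec x t := by
  ext i j
  simp only [Matrix.mul_apply, vecMulVec_apply, Matrix.smul_apply, smul_eq_mul, dotProduct]
  rw [Finset.sum_mul]
  exact Finset.sum_congr rfl fun k _ => by ring

private lemma vecMulVec_mulVec' {V : Type*} [Fintype V] (x z w : V → ℝ) :
    vecMulVec x z *ᵥ w = (z ⬝ᵥ w) • x := by
  ext i
  simp only [Matrix.mulVec, vecMulVec_apply, dotProduct, Pi.smul_apply, smul_eq_mul]
  rw [Finset.sum_mul]
  exact Finset.sum_congr rfl fun k _ => by ring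

private lemma trace_vecMulVec' {V : Type*} [Fintype V] (x z : V → ℝ) :
    Matrix.trace (vecMulVec x z) = x ⬝ᵥ z := by
  simp [Matrix.trace, Matrix.diag, vecMulVec_apply, dotProduct]

private lemma pinv_unique_s15 {n : Type*} [Fintype n] [DecidableEq n] (A M N : Matrix n n ℝ)
    (h1 : A*M*A = A) (h2 : M*A*M = M) (h3 : (A*M)ᵀ = A*M) (h4 : (M*A)ᵀ = M*A)
    (g1 : A*N*A = A) (g2 : N*A*N = N) (g3 : (A*N)ᵀ = A*N) (g4 : (N*A)ᵀ = N*A) :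
    M = N := by
  have hAt : Aᵀ = Aᵀ * (A * N) := by
    conv_lhs => rw [← g1]
    rw [Matrix.transpose_mul, g3]
  have hAM : A * M = A * N := by
    calc A * M = (A*M)ᵀ := h3.symm
      _ = Mᵀ * Aᵀ := Matrix.transpose_mul _ _
      _ = Mᵀ * (Aᵀ * (A*N)) := by rw [← hAt]
      _ = (Mᵀ * Aᵀ) * (A*N) := by rw [Matrix.mul_assoc]
      _ = (A*M)ᵀ * (A*N) := by rw [Matrix.transpose_mul]
      _ = (A*M) * (A*N) := by rw [h3]
      _ = ((A*M)*A) * N := by noncomm_ring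
      _ = A * N := by rw [h1]
  have hAt2 : Aᵀ = (N * A) * Aᵀ := by
    conv_lhs => rw [← g1]
    rw [show A*N*A = A*(N*A) from Matrix.mul_assoc _ _ _, Matrix.transpose_mul, g4]
  have hMA : M * A = N * A := by
    calc M * A = (M*A)ᵀ := h4.symm
      _ = Aᵀ * Mᵀ := Matrix.transpose_mul _ _
      _ = ((N*A) * Aᵀ) * Mᵀ := by rw [← hAt2]
      _ = (N*A) * (Aᵀ * Mᵀ) := by rw [Matrix.mul_assoc]
      _ = (N*A) * (M*A)ᵀ := by rw [Matrix.transpose_mul]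
      _ = (N*A) * (M*A) := by rw [h4]
      _ = N * ((A*M)*A) := by noncomm_ring
      _ = N * A := by rw [h1]
  calc M = M*A*M := h2.symm
    _ = (N*A)*M := by rw [hMA]
    _ = N*(A*M) := Matrix.mul_assoc _ _ _
    _ = N*(A*N) := by rw [hAM]
    _ = N*A*N := (Matrix.mul_assoc _ _ _).symm
    _ = N := g2

private lemma sum_formula' {V : Type*} [Fintype V] (M : Matrix V V ℝ)
    (h : M *ᵥ (fun _ => (1:ℝ)) = 0) :
    ∑ a, ∑ b, (M a a + M b b - 2 * M a b)
      = 2 * (Fintype.card V : ℝ) * Matrix.trace M := by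
  have hrow : ∀ a, ∑ b, M a b = 0 := by
    intro a
    have := congrFun h a
    simpa [Matrix.mulVec, dotProduct] using this
  have h1 : ∀ a : V, ∑ b, (M a a + M b b - 2 * M a b)
      = (Fintype.card V : ℝ) * M a a + Matrix.trace M := by
    intro a
    rw [Finset.sum_sub_distrib, Finset.sum_add_distrib, Finset.sum_const, ← Finset.mul_sum,
      hrow a, mul_zero, sub_zero, Finset.card_univ]
    simp [Matrix.trace, Matrix.diag, nsmul_eq_mul]
  rw [Finset.sum_congr rfl (fun a _ => h1 a), Finset.sum_add_distrib, Finset.sum_const,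
    ← Finset.mul_sum, Finset.card_univ]
  simp only [Matrix.trace, Matrix.diag, nsmul_eq_mul]
  ring

private lemma lap_add_edge {V : Type*} [Fintype V] [DecidableEq V]
    (G G' : SimpleGraph V) [DecidableRel G.Adj] [DecidableRel G'.Adj]
    (u v : V) (huv : u ≠ v) (hadj : ¬ G.Adj u v)
    (hG' : ∀ a b, G'.Adj a b ↔ G.Adj a b ∨ (a = u ∧ b = v) ∨ (a = v ∧ b = u)) :
    G'.lapMatrix ℝ = G.lapMatrix ℝ +
      vecMulVec (fun w => (if w = u then (1:ℝ) else 0) - (if w = v then 1 else 0))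
                (fun w => (if w = u then (1:ℝ) else 0) - (if w = v then 1 else 0)) := by
  have hterm : ∀ i j, (if G'.Adj i j then (1:ℝ) else 0)
      = (if G.Adj i j then 1 else 0)
        + (if (i = u ∧ j = v) ∨ (i = v ∧ j = u) then 1 else 0) := by
    intro i j
    rw [if_congr (hG' i j) rfl rfl]
    by_cases h1 : G.Adj i j
    · have h2 : ¬((i = u ∧ j = v) ∨ (i = v ∧ j = u)) := by
        rintro (⟨rfl, rfl⟩ | ⟨rfl, rfl⟩)
        · exact hadj h1
        · exact hadj h1.symm
      simp [h1, h2]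
    · by_cases h2 : (i = u ∧ j = v) ∨ (i = v ∧ j = u) <;> simp [h1, h2]
  have hdeg : ∀ i, (G'.degree i : ℝ)
      = (G.degree i : ℝ) + ((if i = u then 1 else 0) + (if i = v then 1 else 0)) := by
    intro i
    rw [G'.degree_eq_sum_if_adj (R := ℝ) i, G.degree_eq_sum_if_adj (R := ℝ) i]
    simp_rw [hterm, Finset.sum_add_distrib]
    congr 1
    by_cases hiu : i = u
    · simp [hiu, huv, Finset.sum_ite_eq']
    · by_cases hiv : i = v
      · simp [hiu, hiv, Ne.symm huv, Finset.sum_ite_eq']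
      · simp [hiu, hiv]
  ext i j
  simp only [SimpleGraph.lapMatrix, SimpleGraph.degMatrix, Matrix.sub_apply, Matrix.add_apply,
    Matrix.diagonal_apply, SimpleGraph.adjMatrix_apply, vecMulVec_apply]
  by_cases hij : i = j
  · subst hij
    have hni : ¬ G.Adj i i := G.irrefl
    have hni' : ¬ G'.Adj i i := G'.irrefl
    rw [if_pos rfl, if_pos rfl, if_neg hni, if_neg hni', hdeg i]
    by_cases hiu : i = u <;> by_cases hiv : i = v <;>
      simp [hiu, hiv, huv, Ne.symm huv] <;> ring
  · rw [if_neg hij, if_neg hij]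
    have h := hterm i j
    by_cases hiu : i = u <;> by_cases hiv : i = v <;> by_cases hju : j = u <;>
      by_cases hjv : j = v <;>
      simp_all [huv] <;> ring_nf <;> simp_all
/-- Adding an edge strictly decreases the biharmonic index:
if `G` is connected, `u ≠ v` are non-adjacent, and `G'` is `G` together with
the edge `{u,v}`, then `B(G') < B(G)`, where the biharmonic index of a graph
is `(1/2)·∑_a ∑_b d_B(a,b)²` computed with the Moore–Penrose pseudoinverse of
its Laplacian. -/
theorem biharmonic_index_add_edge_lt
    {V : Type*} [Fintype V] [DecidableEq V]
    (G : SimpleGraph V) [DecidableRel G.Adj] (hG : G.Connected)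
    (u v : V) (huv : u ≠ v) (hadj : ¬ G.Adj u v)
    (G' : SimpleGraph V) [DecidableRel G'.Adj]
    (hG' : ∀ a b, G'.Adj a b ↔ G.Adj a b ∨ (a = u ∧ b = v) ∨ (a = v ∧ b = u))
    (Lp : Matrix V V ℝ)
    (hp1 : G.lapMatrix ℝ * Lp * G.lapMatrix ℝ = G.lapMatrix ℝ)
    (hp2 : Lp * G.lapMatrix ℝ * Lp = Lp)
    (hp3 : (G.lapMatrix ℝ * Lp)ᵀ = G.lapMatrix ℝ * Lp)
    (hp4 : (Lp * G.lapMatrix ℝ)ᵀ = Lp * G.lapMatrix ℝ)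
    (Lp' : Matrix V V ℝ)
    (hp1' : G'.lapMatrix ℝ * Lp' * G'.lapMatrix ℝ = G'.lapMatrix ℝ)
    (hp2' : Lp' * G'.lapMatrix ℝ * Lp' = Lp')
    (hp3' : (G'.lapMatrix ℝ * Lp')ᵀ = G'.lapMatrix ℝ * Lp')
    (hp4' : (Lp' * G'.lapMatrix ℝ)ᵀ = Lp' * G'.lapMatrix ℝ) :
    (1 / 2 : ℝ) * ∑ a, ∑ b, ((Lp' * Lp') a a + (Lp' * Lp') b b - 2 * (Lp' * Lp') a b)
      < (1 / 2 : ℝ) * ∑ a, ∑ b, ((Lp * Lp) a a + (Lp * Lp) b b - 2 * (Lp * Lp) a b) := by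
  classical
  set L : Matrix V V ℝ := G.lapMatrix ℝ with hLdef
  set L' : Matrix V V ℝ := G'.lapMatrix ℝ with hL'def
  have hLsym : Lᵀ = L := (G.isSymm_lapMatrix (R := ℝ)).eq
  have hLpsd : L.PosSemidef := SimpleGraph.posSemidef_lapMatrix ℝ G
  -- symmetry of Lp
  have hLpsym : Lpᵀ = Lp := by
    apply pinv_unique_s15 L Lpᵀ Lp _ _ _ _ hp1 hp2 hp3 hp4
    · calc L * Lpᵀ * L = (L * Lp * L)ᵀ := by
            rw [Matrix.transpose_mul, Matrix.transpose_mul, hLsym, Matrix.mul_assoc]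
        _ = L := by rw [hp1]; exact hLsym
    · calc Lpᵀ * L * Lpᵀ = (Lp * L * Lp)ᵀ := by
            rw [Matrix.transpose_mul, Matrix.transpose_mul, hLsym, Matrix.mul_assoc]
        _ = Lpᵀ := by rw [hp2]
    · have h : L * Lpᵀ = (Lp * L)ᵀ := by rw [Matrix.transpose_mul, hLsym]
      rw [h, Matrix.transpose_transpose, hp4]
    · have h : Lpᵀ * L = (L * Lp)ᵀ := by rw [Matrix.transpose_mul, hLsym]
      rw [h, Matrix.transpose_transpose, hp3]
  have hcomm : Lp * L = L * Lp := by
    conv_lhs => rw [← hp4, Matrix.transpose_mul, hLpsym, hLsym]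
  have hPL : L * Lp * L = L := hp1
  have hPLp : L * Lp * Lp = Lp := by rw [← hcomm]; exact hp2
  -- kernel of L consists of constant vectors
  have hker : ∀ x : V → ℝ, L *ᵥ x = 0 → ∀ i j : V, x i = x j := by
    intro x hx i j
    refine (G.lapMatrix_mulVec_eq_zero_iff_forall_reachable (x := x)).mp ?_ i j
      (hG.preconnected i j)
    exact hx
  -- the edge vector
  set b : V → ℝ := fun w => (if w = u then (1:ℝ) else 0) - (if w = v then 1 else 0) with hbdef
  have hbsum : ∑ j, b j = 0 := by
    simp [hbdef, Finset.sum_sub_distrib, Finset.sum_ite_eq']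
  have hLe : ∀ a c : V, L a c = L c a := fun a c => (G.isSymm_lapMatrix (R := ℝ)).apply c a
  -- L·Lp fixes b
  have hPb : (L * Lp) *ᵥ b = b := by
    have hQL : (1 - L * Lp) * L = 0 := by
      rw [Matrix.sub_mul, Matrix.one_mul, hp1, sub_self]
    have hrow : ∀ i j k : V, (1 - L * Lp : Matrix V V ℝ) i j = (1 - L * Lp : Matrix V V ℝ) i k := by
      intro i
      apply hker (fun j => (1 - L * Lp : Matrix V V ℝ) i j)
      ext j
      have h0 : ∑ k, (1 - L * Lp : Matrix V V ℝ) i k * L k j = 0 := by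
        have := congrFun (congrFun hQL i) j
        simpa [Matrix.mul_apply] using this
      simp only [Matrix.mulVec, dotProduct, Pi.zero_apply]
      rw [← h0]
      exact Finset.sum_congr rfl fun k _ => by rw [mul_comm, hLe j k]
    have hQb : (1 - L * Lp : Matrix V V ℝ) *ᵥ b = 0 := by
      ext i
      calc ((1 - L * Lp : Matrix V V ℝ) *ᵥ b) i
          = ∑ j, (1 - L * Lp : Matrix V V ℝ) i j * b j := rfl
        _ = ∑ j, (1 - L * Lp : Matrix V V ℝ) i u * b j :=
            Finset.sum_congr rfl fun j _ => by rw [hrow i j u]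
        _ = (1 - L * Lp : Matrix V V ℝ) i u * ∑ j, b j := by rw [Finset.mul_sum]
        _ = 0 := by rw [hbsum, mul_zero]
    have h := hQb
    rw [Matrix.sub_mulVec, Matrix.one_mulVec, sub_eq_zero] at h
    exact h.symm
  set y : V → ℝ := Lp *ᵥ b with hydef
  have hLy : L *ᵥ y = b := by
    rw [hydef, Matrix.mulVec_mulVec, hPb]
  have hPy : (L * Lp) *ᵥ y = y := by
    rw [hydef, Matrix.mulVec_mulVec, hPLp]
  set β : ℝ := b ⬝ᵥ y with hβdef
  have hβ : β = y ⬝ᵥ (L *ᵥ y) := by rw [hβdef, ← hLy, dotProduct_comm]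
  have hβnn : 0 ≤ β := by rw [hβ]; simpa using hLpsd.dotProduct_mulVec_nonneg y
  have h1β : (0:ℝ) < 1 + β := by linarith
  set c : ℝ := (1 + β)⁻¹ with hcdef
  have hc : c * (1 + β) = 1 := inv_mul_cancel₀ (ne_of_gt h1β)
  have hcpos : 0 < c := inv_pos.mpr h1β
  have hcb : c * β = 1 - c := by linear_combination hc
  set Y : Matrix V V ℝ := vecMulVec y y with hYdef
  set N : Matrix V V ℝ := Lp - c • Y with hNdef
  -- vecMul facts
  have hbLp : b ᵥ* Lp = y := by rw [← hLpsym, Matrix.vecMul_transpose, ← hydef]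
  have hyL : y ᵥ* L = b := by rw [← hLsym, Matrix.vecMul_transpose, hLy]
  -- L' = L + vecMulVec b b
  have hL'eq : L' = L + vecMulVec b b :=
    lap_add_edge G G' u v huv hadj hG'
  -- L' * N = L * Lp
  have hL'N : L' * N = L * Lp := by
    rw [hL'eq, hNdef, hYdef, Matrix.add_mul, Matrix.mul_sub, Matrix.mul_sub,
      Matrix.mul_smul, Matrix.mul_smul, mul_vecMulVec', hLy,
      vecMulVec_mul', hbLp, vecMulVec_mul_vecMulVec', ← hβdef, smul_smul, hcb]
    module
  have hNL' : N * L' = L * Lp := by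
    rw [hL'eq, hNdef, hYdef, Matrix.mul_add, Matrix.sub_mul, Matrix.sub_mul,
      Matrix.smul_mul, Matrix.smul_mul, vecMulVec_mul', hyL,
      mul_vecMulVec', ← hydef, vecMulVec_mul_vecMulVec', hcomm]
    rw [show y ⬝ᵥ b = β from by rw [hβdef, dotProduct_comm]]
    rw [smul_smul, hcb]
    module
  -- Penrose conditions for N
  have cond1 : L' * N * L' = L' := by
    rw [hL'N, hL'eq, Matrix.mul_add, hPL, mul_vecMulVec', hPb]
  have cond2 : N * L' * N = N := by
    rw [hNL', hNdef, hYdef, Matrix.mul_sub, hPLp, Matrix.mul_smul, mul_vecMulVec', hPy]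
  have cond3 : (L' * N)ᵀ = L' * N := by rw [hL'N]; exact hp3
  have cond4 : (N * L')ᵀ = N * L' := by rw [hNL']; exact hp3
  have hLp'N : Lp' = N := pinv_unique_s15 L' Lp' N hp1' hp2' hp3' hp4' cond1 cond2 cond3 cond4
  -- row sums vanish
  have hL1 : L *ᵥ (fun _ => (1:ℝ)) = 0 := G.lapMatrix_mulVec_const_eq_zero
  have hdecomp : Lp * Lp * L = Lp := by
    rw [Matrix.mul_assoc, hcomm, ← Matrix.mul_assoc, hp2]
  have hLp1 : Lp *ᵥ (fun _ => (1:ℝ)) = 0 := by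
    conv_lhs => rw [← hdecomp]
    rw [← Matrix.mulVec_mulVec, hL1, Matrix.mulVec_zero]
  have hysum : y ⬝ᵥ (fun _ => (1:ℝ)) = 0 := by
    rw [hydef, dotProduct_comm, dotProduct_mulVec, ← hLpsym, Matrix.vecMul_transpose,
      hLp1, zero_dotProduct]
  have hN1 : N *ᵥ (fun _ => (1:ℝ)) = 0 := by
    rw [hNdef, Matrix.sub_mulVec, hLp1, Matrix.smul_mulVec, hYdef, vecMulVec_mulVec',
      hysum, zero_smul, smul_zero, sub_zero]
  have hM1 : (Lp * Lp) *ᵥ (fun _ => (1:ℝ)) = 0 := by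
    rw [← Matrix.mulVec_mulVec, hLp1, Matrix.mulVec_zero]
  have hM1' : (Lp' * Lp') *ᵥ (fun _ => (1:ℝ)) = 0 := by
    rw [hLp'N, ← Matrix.mulVec_mulVec, hN1, Matrix.mulVec_zero]
  rw [sum_formula' _ hM1, sum_formula' _ hM1']
  -- reduce to traces
  have key : Matrix.trace (Lp' * Lp') < Matrix.trace (Lp * Lp) := by
    set z : V → ℝ := Lp *ᵥ y with hzdef
    have hLz : L *ᵥ z = y := by rw [hzdef, Matrix.mulVec_mulVec, hPy]
    have hyLp : y ᵥ* Lp = z := by rw [← hLpsym, Matrix.vecMul_transpose, ← hzdef]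
    set s2 : ℝ := y ⬝ᵥ y with hs2def
    set s3 : ℝ := y ⬝ᵥ z with hs3def
    have htr : Matrix.trace (Lp' * Lp')
        = Matrix.trace (Lp * Lp) - 2 * c * s3 + c^2 * s2^2 := by
      rw [hLp'N, hNdef, hYdef, Matrix.sub_mul, Matrix.mul_sub, Matrix.mul_sub,
        Matrix.smul_mul, Matrix.mul_smul, Matrix.mul_smul, Matrix.smul_mul,
        mul_vecMulVec', ← hzdef, vecMulVec_mul', hyLp, vecMulVec_mul_vecMulVec']
      simp only [Matrix.trace_sub, Matrix.trace_smul, trace_vecMulVec', smul_eq_mul]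
      rw [show z ⬝ᵥ y = y ⬝ᵥ z from dotProduct_comm _ _, ← hs3def, ← hs2def]
      ring
    -- Cauchy–Schwarz : s2^2 ≤ β * s3
    obtain ⟨C, hC⟩ : ∃ C : Matrix V V ℝ, L = Cᴴ * C := by
      open scoped MatrixOrder in
      exact CStarAlgebra.nonneg_iff_eq_star_mul_self.mp hLpsd.nonneg
    have hCt : L = Cᵀ * C := by
      rw [hC, Matrix.conjTranspose_eq_transpose_of_trivial]
    have hform : ∀ w t : V → ℝ, w ⬝ᵥ (L *ᵥ t) = (C *ᵥ w) ⬝ᵥ (C *ᵥ t) := by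
      intro w t
      rw [hCt, ← Matrix.mulVec_mulVec, dotProduct_mulVec, Matrix.vecMul_transpose]
    have hCS : s2^2 ≤ β * s3 := by
      have h1 : s2 = (C *ᵥ y) ⬝ᵥ (C *ᵥ z) := by
        have h : s2 = y ⬝ᵥ (L *ᵥ z) := by rw [hLz, hs2def]
        rw [h, hform]
      have h2 : β = (C *ᵥ y) ⬝ᵥ (C *ᵥ y) := by rw [hβ, hform]
      have h3 : s3 = (C *ᵥ z) ⬝ᵥ (C *ᵥ z) := by
        have h : s3 = z ⬝ᵥ (L *ᵥ z) := by rw [hLz, hs3def, dotProduct_comm]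
        rw [h, hform]
      rw [h1, h2, h3]
      have := Finset.sum_mul_sq_le_sq_mul_sq Finset.univ (C *ᵥ y) (C *ᵥ z)
      simpa [dotProduct, sq] using this
    have hs3nn : 0 ≤ s3 := by
      have h : s3 = z ⬝ᵥ (L *ᵥ z) := by rw [hLz, hs3def, dotProduct_comm]
      rw [h]
      simpa using hLpsd.dotProduct_mulVec_nonneg z
    have hbne : b ≠ 0 := by
      intro h0
      have := congrFun h0 u
      simp [hbdef, huv] at this
    have hs3pos : 0 < s3 := by
      rcases lt_or_eq_of_le hs3nn with h | h
      · exact h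
      · exfalso
        have hz0 : L *ᵥ z = 0 := by
          have h4 : star z ⬝ᵥ (L *ᵥ z) = 0 := by
            rw [star_trivial]
            have h5 : s3 = z ⬝ᵥ (L *ᵥ z) := by rw [hLz, hs3def, dotProduct_comm]
            rw [← h5]
            exact h.symm
          exact (hLpsd.dotProduct_mulVec_zero_iff z).mp h4
        have hy0 : y = 0 := by rw [← hLz, hz0]
        have hb0 : b = 0 := by rw [← hLy, hy0, Matrix.mulVec_zero]
        exact hbne hb0
    rw [htr]
    have hstep1 : c^2 * s2^2 ≤ c^2 * (β * s3) :=
      mul_le_mul_of_nonneg_left hCS (sq_nonneg c)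
    have hstep2 : c^2 * (β * s3) < 2 * c * s3 := by
      nlinarith [mul_pos (mul_pos hcpos hcpos) hs3pos, hc, hβnn, hs3pos, hcpos]
    linarith
  have hcard : (0:ℝ) < (Fintype.card V : ℝ) := by
    exact_mod_cast Fintype.card_pos_iff.mpr ⟨u⟩
  have hmul := mul_lt_mul_of_pos_left key
    (by linarith : (0:ℝ) < (1/2) * (2 * (Fintype.card V : ℝ)))
  calc (1/2 : ℝ) * (2 * (Fintype.card V : ℝ) * Matrix.trace (Lp' * Lp'))
      = (1/2) * (2 * (Fintype.card V : ℝ)) * Matrix.trace (Lp' * Lp') := by ring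
    _ < (1/2) * (2 * (Fintype.card V : ℝ)) * Matrix.trace (Lp * Lp) := hmul
    _ = (1/2 : ℝ) * (2 * (Fintype.card V : ℝ) * Matrix.trace (Lp * Lp)) := by ring
end

section
/- Let G be a finite connected simple graph on n ≥ 2 vertices. Then the biharmonic index satisfies B(G) ≥ (n−1)/n, with equality if and only if G is isomorphic to the complete graph K_n. -/
set_option linter.unusedSectionVars false
open Matrix Finset

section Aux
variable {V : Type*} [Fintype V] [DecidableEq V]

lemma trace_transpose_mul_self' (A : Matrix V V ℝ) :
    (Aᵀ * A).trace = ∑ j, ∑ i, A i j * A i j := by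
  simp [Matrix.trace, Matrix.mul_apply, Matrix.diag]

lemma trace_transpose_mul_self_nonneg' (A : Matrix V V ℝ) : 0 ≤ (Aᵀ * A).trace := by
  rw [trace_transpose_mul_self']
  exact Finset.sum_nonneg fun j _ => Finset.sum_nonneg fun i _ => mul_self_nonneg _

lemma eq_zero_of_trace_transpose_mul_self' {A : Matrix V V ℝ}
    (h : (Aᵀ * A).trace = 0) : A = 0 := by
  rw [trace_transpose_mul_self'] at h
  ext i j
  have h1 : ∀ j ∈ univ, (0:ℝ) ≤ ∑ i, A i j * A i j :=
    fun j _ => Finset.sum_nonneg fun i _ => mul_self_nonneg _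
  have h2 := (Finset.sum_eq_zero_iff_of_nonneg h1).mp h j (mem_univ j)
  have h3 : ∀ i ∈ univ, (0:ℝ) ≤ A i j * A i j := fun i _ => mul_self_nonneg _
  have h4 := (Finset.sum_eq_zero_iff_of_nonneg h3).mp h2 i (mem_univ i)
  simpa using mul_self_eq_zero.mp h4

lemma lap_diag (H : SimpleGraph V) [DecidableRel H.Adj] (i : V) :
    H.lapMatrix ℝ i i = (H.degree i : ℝ) := by
  simp [SimpleGraph.lapMatrix, SimpleGraph.degMatrix]

lemma lap_off (H : SimpleGraph V) [DecidableRel H.Adj] {i j : V} (h : i ≠ j) :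
    H.lapMatrix ℝ i j = if H.Adj i j then (-1:ℝ) else 0 := by
  simp only [SimpleGraph.lapMatrix, SimpleGraph.degMatrix, Matrix.sub_apply,
    Matrix.diagonal_apply_ne _ h, SimpleGraph.adjMatrix_apply]
  split_ifs <;> norm_num

end Aux

/-- For a connected graph `G` on `n ≥ 2` vertices the
biharmonic index satisfies `B(G) ≥ (n−1)/n`, with equality iff `G` is
isomorphic to the complete graph `K_n`. -/
theorem biharmonic_index_ge_and_eq_iff_complete
    {V : Type*} [Fintype V] [DecidableEq V] {n : ℕ}
    (G : SimpleGraph V) [DecidableRel G.Adj] (hG : G.Connected)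
    (hn : Fintype.card V = n) (hn2 : 2 ≤ n)
    (Lp : Matrix V V ℝ)
    (hp1 : G.lapMatrix ℝ * Lp * G.lapMatrix ℝ = G.lapMatrix ℝ)
    (hp2 : Lp * G.lapMatrix ℝ * Lp = Lp)
    (hp3 : (G.lapMatrix ℝ * Lp)ᵀ = G.lapMatrix ℝ * Lp)
    (hp4 : (Lp * G.lapMatrix ℝ)ᵀ = Lp * G.lapMatrix ℝ) :
    (1 / 2 : ℝ) * ∑ a, ∑ b, ((Lp * Lp) a a + (Lp * Lp) b b - 2 * (Lp * Lp) a b)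
        ≥ ((n : ℝ) - 1) / n
    ∧ ((1 / 2 : ℝ) * ∑ a, ∑ b, ((Lp * Lp) a a + (Lp * Lp) b b - 2 * (Lp * Lp) a b)
          = ((n : ℝ) - 1) / n
        ↔ Nonempty (G ≃g (⊤ : SimpleGraph V))) := by
  classical
  set L := G.lapMatrix ℝ with hLdef
  have hLsym : Lᵀ = L := G.isSymm_lapMatrix (R := ℝ)
  set J : Matrix V V ℝ := Matrix.of (fun _ _ => (1:ℝ)) with hJdef
  have hJsym : Jᵀ = J := rfl
  have hn0 : (0:ℝ) < (n:ℝ) := by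
    have : (2:ℝ) ≤ (n:ℝ) := by exact_mod_cast hn2
    linarith
  -- row/column sums of L vanish
  have hrowL : ∀ i, ∑ j, L i j = 0 := by
    intro i
    have := congrFun (G.lapMatrix_mulVec_const_eq_zero (R := ℝ)) i
    simpa [Matrix.mulVec, dotProduct] using this
  have hcolL : ∀ j, ∑ i, L i j = 0 := by
    intro j
    have : ∀ i, L i j = L j i := by
      intro i
      conv_lhs => rw [← hLsym]
      rfl
    simp only [this]
    exact hrowL j
  have hLJ : L * J = 0 := by
    ext i j
    simp [Matrix.mul_apply, hJdef, hrowL i]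
  have hJL : J * L = 0 := by
    have := congrArg Matrix.transpose hLJ
    rwa [Matrix.transpose_mul, hJsym, hLsym, Matrix.transpose_zero] at this
  -- N = Lpᵀ satisfies the Penrose identities; conclude Lp is symmetric
  set N := Lpᵀ with hNdef
  have g1 : L * N * L = L := by
    have := congrArg Matrix.transpose hp1
    rwa [Matrix.transpose_mul, Matrix.transpose_mul, hLsym, ← hNdef,
      ← Matrix.mul_assoc] at this
  have g2 : N * L * N = N := by
    have := congrArg Matrix.transpose hp2
    rwa [Matrix.transpose_mul, Matrix.transpose_mul, hLsym, ← hNdef,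
      ← Matrix.mul_assoc] at this
  have f3 : N * L = L * Lp := by
    have := hp3
    rwa [Matrix.transpose_mul, hLsym, ← hNdef] at this
  have f4 : L * N = Lp * L := by
    have := hp4
    rwa [Matrix.transpose_mul, hLsym, ← hNdef] at this
  have hLNsym : (L * N)ᵀ = L * N := by
    rw [f4, hp4]
  have c1 : L * Lp = L * N := by
    calc L * Lp = (L * N * L) * Lp := by rw [g1]
      _ = (L * N) * (L * Lp) := by simp only [Matrix.mul_assoc]
      _ = (L * N)ᵀ * (L * Lp)ᵀ := by rw [hLNsym, hp3]
      _ = ((L * Lp) * (L * N))ᵀ := by rw [← Matrix.transpose_mul]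
      _ = ((L * Lp * L) * N)ᵀ := by rw [show (L * Lp) * (L * N) = (L * Lp * L) * N by
            simp only [Matrix.mul_assoc]]
      _ = (L * N)ᵀ := by rw [hp1]
      _ = L * N := hLNsym
  have hNLsym : (N * L)ᵀ = N * L := by rw [f3, hp3]
  have c2 : Lp * L = N * L := by
    calc Lp * L = Lp * (L * N * L) := by rw [g1]
      _ = (Lp * L) * (N * L) := by simp only [Matrix.mul_assoc]
      _ = (Lp * L)ᵀ * (N * L)ᵀ := by rw [hp4, hNLsym]
      _ = ((N * L) * (Lp * L))ᵀ := by rw [← Matrix.transpose_mul]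
      _ = (N * (L * Lp * L))ᵀ := by rw [show (N * L) * (Lp * L) = N * (L * Lp * L) by
            simp only [Matrix.mul_assoc]]
      _ = (N * L)ᵀ := by rw [hp1]
      _ = N * L := hNLsym
  have hsym : Lpᵀ = Lp := by
    have : N = Lp := by
      calc N = N * L * N := g2.symm
        _ = (N * L) * N := rfl
        _ = (Lp * L) * N := by rw [c2]
        _ = Lp * (L * N) := by rw [Matrix.mul_assoc]
        _ = Lp * (L * Lp) := by rw [← c1]
        _ = Lp := by rw [← Matrix.mul_assoc]; exact hp2
    rw [← hNdef, this]
  -- Lp annihilates J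
  have hLpJ : Lp * J = 0 := by
    calc Lp * J = (Lp * L * Lp) * J := by rw [hp2]
      _ = Lp * ((L * Lp) * J) := by simp only [Matrix.mul_assoc]
      _ = Lp * ((N * L) * J) := by rw [f3]
      _ = Lp * (N * (L * J)) := by rw [Matrix.mul_assoc]
      _ = 0 := by rw [hLJ, Matrix.mul_zero, Matrix.mul_zero]
  have hJLp : J * Lp = 0 := by
    have := congrArg Matrix.transpose hLpJ
    rwa [Matrix.transpose_mul, hJsym, hsym, Matrix.transpose_zero] at this
  -- P = L * Lp is the projection 1 - J/n
  set P := L * Lp with hPdef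
  have hPsym : Pᵀ = P := hp3
  have hPP : P * P = P := by
    calc P * P = (L * Lp * L) * Lp := by rw [hPdef]; simp only [Matrix.mul_assoc]
      _ = P := by rw [hp1]
  have hLP : L * P = L := by
    have h1 : (L * P)ᵀ = L := by
      rw [Matrix.transpose_mul, hPsym, hLsym]
      exact hp1
    calc L * P = ((L * P)ᵀ)ᵀ := by rw [Matrix.transpose_transpose]
      _ = Lᵀ := by rw [h1]
      _ = L := hLsym
  have hLK : L * (1 - P) = 0 := by
    rw [Matrix.mul_sub, Matrix.mul_one, hLP, sub_self]
  have hcolconst : ∀ j i i', (1 - P) i j = (1 - P) i' j := by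
    intro j i i'
    have hx : Matrix.toLin' L (fun k => (1 - P) k j) = 0 := by
      rw [Matrix.toLin'_apply]
      ext i''
      have := congrFun (congrFun hLK i'') j
      simpa [Matrix.mulVec, dotProduct, Matrix.mul_apply] using this
    exact (G.lapMatrix_mulVec_eq_zero_iff_forall_reachable
      (x := fun k => (1 - P) k j)).mp hx i i' (hG.preconnected i i')
  have hcolP : ∀ j, ∑ i, P i j = 0 := by
    intro j
    rw [hPdef]
    simp only [Matrix.mul_apply]
    rw [Finset.sum_comm]
    simp only [← Finset.sum_mul, hcolL, zero_mul, Finset.sum_const_zero]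
  have hKval : ∀ i j, (1 - P) i j = (n:ℝ)⁻¹ := by
    intro i j
    have hsum : ∑ i', (1 - P) i' j = 1 := by
      simp only [Matrix.sub_apply, Finset.sum_sub_distrib, hcolP j, sub_zero]
      simp [Matrix.one_apply]
    have hconst : ∑ i', (1 - P) i' j = (n:ℝ) * (1 - P) i j := by
      rw [Finset.sum_congr rfl (fun i' _ => hcolconst j i' i)]
      rw [Finset.sum_const, Finset.card_univ, hn, nsmul_eq_mul]
    rw [hconst] at hsum
    field_simp at hsum ⊢
    linarith
  have hPval : P = 1 - (n:ℝ)⁻¹ • J := by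
    ext i j
    have := hKval i j
    simp only [Matrix.sub_apply, Matrix.smul_apply, hJdef, Matrix.of_apply, smul_eq_mul,
      mul_one] at this ⊢
    linarith
  have hTrP : P.trace = (n:ℝ) - 1 := by
    have hTrJ : J.trace = (n:ℝ) := by
      simp [Matrix.trace, Matrix.diag, hJdef, hn]
    rw [hPval, Matrix.trace_sub, Matrix.trace_smul, Matrix.trace_one, hTrJ, hn,
      smul_eq_mul, inv_mul_cancel₀ (ne_of_gt hn0)]
  -- the complement graph
  set Lc := Gᶜ.lapMatrix ℝ with hLcdef
  have hLcsym : Lcᵀ = Lc := Gᶜ.isSymm_lapMatrix (R := ℝ)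
  have hrowLc : ∀ i, ∑ j, Lc i j = 0 := by
    intro i
    have := congrFun (Gᶜ.lapMatrix_mulVec_const_eq_zero (R := ℝ)) i
    simpa [Matrix.mulVec, dotProduct] using this
  have hLcJ : Lc * J = 0 := by
    ext i j
    simp [Matrix.mul_apply, hJdef, hrowLc i]
  have hJLc : J * Lc = 0 := by
    have := congrArg Matrix.transpose hLcJ
    rwa [Matrix.transpose_mul, hJsym, hLcsym, Matrix.transpose_zero] at this
  have hLLc : L + Lc = (n:ℝ) • 1 - J := by
    ext i j
    simp only [Matrix.add_apply, Matrix.sub_apply, Matrix.smul_apply, Matrix.one_apply,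
      hJdef, Matrix.of_apply, smul_eq_mul]
    by_cases h : i = j
    · subst h
      rw [if_pos rfl, hLdef, hLcdef, lap_diag G i, lap_diag Gᶜ i]
      have hdlt : G.degree i < Fintype.card V := G.degree_lt_card_verts i
      have hdc : Gᶜ.degree i = Fintype.card V - 1 - G.degree i := G.degree_compl i
      have hnat : G.degree i + Gᶜ.degree i = n - 1 := by omega
      have h1 : (1:ℕ) ≤ n := by omega
      have hcast : (G.degree i : ℝ) + (Gᶜ.degree i : ℝ) = (n:ℝ) - 1 := by
        calc (G.degree i : ℝ) + (Gᶜ.degree i : ℝ)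
            = ((G.degree i + Gᶜ.degree i : ℕ) : ℝ) := by push_cast; ring
          _ = ((n - 1 : ℕ) : ℝ) := by rw [hnat]
          _ = (n:ℝ) - 1 := by rw [Nat.cast_sub h1, Nat.cast_one]
      rw [hcast]; ring
    · rw [if_neg h, hLdef, hLcdef, lap_off G h, lap_off Gᶜ h]
      by_cases hA : G.Adj i j
      · rw [if_pos hA, if_neg (by simp [SimpleGraph.compl_adj, hA])]; ring
      · rw [if_neg hA, if_pos ((SimpleGraph.compl_adj G i j).mpr ⟨h, hA⟩)]; ring
  -- PSD factorizations
  open scoped MatrixOrder in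
  obtain ⟨Nm, hNmc⟩ := CStarAlgebra.nonneg_iff_eq_star_mul_self.mp
    (SimpleGraph.posSemidef_lapMatrix ℝ Gᶜ).nonneg
  have hNm : Lc = Nmᵀ * Nm := by
    rw [hLcdef, hNmc, Matrix.star_eq_conjTranspose, Matrix.conjTranspose_eq_transpose_of_trivial]
  open scoped MatrixOrder in
  obtain ⟨Mm, hMmc⟩ := CStarAlgebra.nonneg_iff_eq_star_mul_self.mp
    (SimpleGraph.posSemidef_lapMatrix ℝ G).nonneg
  have hMm : L = Mmᵀ * Mm := by
    rw [hLdef, hMmc, Matrix.star_eq_conjTranspose, Matrix.conjTranspose_eq_transpose_of_trivial]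
  -- trace identities
  have hLc_expr : Lc = (n:ℝ) • 1 - J - L := by
    rw [← hLLc, add_sub_cancel_left]
  have eLpLc : Lp * Lc = (n:ℝ) • Lp - Lp * L := by
    rw [hLc_expr, Matrix.mul_sub, Matrix.mul_sub, Matrix.mul_smul, Matrix.mul_one,
      hLpJ, sub_zero]
  have eLpLcLp : Lp * Lc * Lp = (n:ℝ) • (Lp * Lp) - Lp := by
    calc Lp * Lc * Lp = ((n:ℝ) • Lp - Lp * L) * Lp := by rw [eLpLc]
      _ = (n:ℝ) • (Lp * Lp) - Lp * L * Lp := by rw [Matrix.sub_mul, Matrix.smul_mul]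
      _ = (n:ℝ) • (Lp * Lp) - Lp := by rw [hp2]
  have hTrLpL : (Lp * L).trace = (n:ℝ) - 1 := by
    rw [Matrix.trace_mul_comm]; exact hTrP
  have hB : (Lp * Lc).trace = (n:ℝ) * Lp.trace - ((n:ℝ) - 1) := by
    rw [eLpLc, Matrix.trace_sub, Matrix.trace_smul, hTrLpL, smul_eq_mul]
  have hA : (Lp * Lc * Lp).trace = (n:ℝ) * (Lp * Lp).trace - Lp.trace := by
    rw [eLpLcLp, Matrix.trace_sub, Matrix.trace_smul, smul_eq_mul]
  -- nonnegativity of the two trace terms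
  have hA' : Lp * Lc * Lp = (Nm * Lp)ᵀ * (Nm * Lp) := by
    rw [Matrix.transpose_mul, hsym, hNm]
    simp only [Matrix.mul_assoc]
  have hAnn : 0 ≤ (Lp * Lc * Lp).trace := by
    rw [hA']; exact trace_transpose_mul_self_nonneg' _
  have e1 : (Mm * Lp * Nmᵀ)ᵀ * (Mm * Lp * Nmᵀ) = Nm * (Lp * Nmᵀ) := by
    rw [Matrix.transpose_mul, Matrix.transpose_mul, Matrix.transpose_transpose, hsym]
    have h2 : Nm * (Lp * Mmᵀ) * (Mm * Lp * Nmᵀ) = Nm * ((Lp * (Mmᵀ * Mm) * Lp) * Nmᵀ) := by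
      simp only [Matrix.mul_assoc]
    rw [h2, ← hMm, hp2]
  have e2 : (Nm * (Lp * Nmᵀ)).trace = (Lp * Lc).trace := by
    rw [Matrix.trace_mul_comm Nm (Lp * Nmᵀ), Matrix.mul_assoc, ← hNm]
  have hBnn : 0 ≤ (Lp * Lc).trace := by
    have := trace_transpose_mul_self_nonneg' (Mm * Lp * Nmᵀ)
    rwa [e1, e2] at this
  -- key identity
  have hKey : (n:ℝ)^2 * (Lp * Lp).trace
      = ((n:ℝ) - 1) + (Lp * Lc).trace + (n:ℝ) * (Lp * Lc * Lp).trace := by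
    rw [hA, hB]; ring
  -- the biharmonic sum equals n * trace(Lp²)
  have hrowLp : ∀ i, ∑ j, Lp i j = 0 := by
    intro i
    have := congrFun (congrFun hLpJ i) i
    simpa [Matrix.mul_apply, hJdef] using this
  have hXrow : ∀ a, ∑ b, (Lp * Lp) a b = 0 := by
    intro a
    simp only [Matrix.mul_apply]
    rw [Finset.sum_comm]
    simp only [← Finset.mul_sum, hrowLp, mul_zero, Finset.sum_const_zero]
  have htr : (Lp * Lp).trace = ∑ b, (Lp * Lp) b b := by
    simp [Matrix.trace, Matrix.diag]
  have hsum : ∑ a, ∑ b, ((Lp * Lp) a a + (Lp * Lp) b b - 2 * (Lp * Lp) a b)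
      = 2 * ((n:ℝ) * (Lp * Lp).trace) := by
    have h1 : ∀ a : V, ∑ b : V, ((Lp * Lp) a a + (Lp * Lp) b b - 2 * (Lp * Lp) a b)
        = (n:ℝ) * (Lp * Lp) a a + (Lp * Lp).trace := by
      intro a
      rw [Finset.sum_sub_distrib, Finset.sum_add_distrib, Finset.sum_const, Finset.card_univ,
        hn, ← Finset.mul_sum, hXrow a, mul_zero, sub_zero, nsmul_eq_mul, htr]
    rw [Finset.sum_congr rfl fun a _ => h1 a, Finset.sum_add_distrib, Finset.sum_const,
      Finset.card_univ, hn, ← Finset.mul_sum, ← htr, nsmul_eq_mul]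
    ring
  have hBval : (1/2 : ℝ) * (∑ a, ∑ b, ((Lp * Lp) a a + (Lp * Lp) b b - 2 * (Lp * Lp) a b))
      = (n:ℝ) * (Lp * Lp).trace := by rw [hsum]; ring
  constructor
  · rw [ge_iff_le, hBval, div_le_iff₀ hn0]
    have h3 : ((n:ℝ) - 1) ≤ (n:ℝ)^2 * (Lp * Lp).trace := by
      linarith [hKey, hBnn, mul_nonneg hn0.le hAnn]
    have h4 : (n:ℝ) * (Lp * Lp).trace * (n:ℝ) = (n:ℝ)^2 * (Lp * Lp).trace := by ring
    linarith [h3, h4]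
  constructor
  · intro heq
    rw [hBval] at heq
    have h2 : (n:ℝ)^2 * (Lp * Lp).trace = (n:ℝ) - 1 := by
      calc (n:ℝ)^2 * (Lp * Lp).trace = (n:ℝ) * ((n:ℝ) * (Lp * Lp).trace) := by ring
        _ = (n:ℝ) * (((n:ℝ) - 1) / n) := by rw [heq]
        _ = (n:ℝ) - 1 := by field_simp
    have hc1 : (Lp * Lc).trace = 0 := by
      have := mul_nonneg hn0.le hAnn
      linarith [hKey, h2, hBnn, this]
    have hzero : Mm * Lp * Nmᵀ = 0 := by
      apply eq_zero_of_trace_transpose_mul_self'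
      rw [e1, e2]; exact hc1
    have hLLpN : L * (Lp * Nmᵀ) = 0 := by
      calc L * (Lp * Nmᵀ) = (Mmᵀ * Mm) * (Lp * Nmᵀ) := by rw [← hMm]
        _ = Mmᵀ * (Mm * Lp * Nmᵀ) := by simp only [Matrix.mul_assoc]
        _ = 0 := by rw [hzero, Matrix.mul_zero]
    have hPLc : P * Lc = 0 := by
      calc P * Lc = (L * Lp) * (Nmᵀ * Nm) := by rw [hPdef, hNm]
        _ = (L * (Lp * Nmᵀ)) * Nm := by simp only [Matrix.mul_assoc]
        _ = 0 := by rw [hLLpN, Matrix.zero_mul]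
    have hLc0 : Lc = 0 := by
      have h1 : (1 : Matrix V V ℝ) = P + (n:ℝ)⁻¹ • J := by
        rw [hPval, sub_add_cancel]
      calc Lc = (1 : Matrix V V ℝ) * Lc := by rw [Matrix.one_mul]
        _ = (P + (n:ℝ)⁻¹ • J) * Lc := by rw [← h1]
        _ = P * Lc + (n:ℝ)⁻¹ • (J * Lc) := by rw [Matrix.add_mul, Matrix.smul_mul]
        _ = 0 := by rw [hPLc, hJLc, smul_zero, add_zero]
    have hGtop : G = ⊤ := by
      ext i j
      simp only [SimpleGraph.top_adj]
      constructor
      · exact fun h => G.ne_of_adj h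
      · intro hij
        by_contra hA2
        have hc : Gᶜ.Adj i j := (SimpleGraph.compl_adj G i j).mpr ⟨hij, hA2⟩
        have hval := congrFun (congrFun hLc0 i) j
        rw [hLcdef, lap_off Gᶜ hij, if_pos hc] at hval
        norm_num at hval
    rw [hGtop]
    exact ⟨SimpleGraph.Iso.refl⟩
  · rintro ⟨e⟩
    have hGtop : G = ⊤ := by
      ext i j
      simp only [SimpleGraph.top_adj]
      constructor
      · exact fun h => G.ne_of_adj h
      · intro hij
        have h1 : (⊤ : SimpleGraph V).Adj (e i) (e j) ↔ G.Adj i j := e.map_rel_iff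
        apply h1.mp
        simp only [SimpleGraph.top_adj]
        exact fun hc => hij (e.injective hc)
    have hnadj : ∀ i j, ¬ Gᶜ.Adj i j := by
      intro i j hc
      rw [SimpleGraph.compl_adj] at hc
      exact hc.2 (by rw [hGtop]; exact hc.1)
    have hLc0 : Lc = 0 := by
      ext i j
      by_cases h : i = j
      · subst h
        have hempty : Gᶜ.neighborFinset i = ∅ := by
          apply Finset.eq_empty_of_forall_notMem
          intro k hk
          rw [SimpleGraph.mem_neighborFinset] at hk
          exact hnadj i k hk
        have hdeg : Gᶜ.degree i = 0 := by
          rw [SimpleGraph.degree, hempty, Finset.card_empty]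
        rw [hLcdef, lap_diag Gᶜ i, hdeg]
        simp
      · rw [hLcdef, lap_off Gᶜ h, if_neg (hnadj i j)]
        simp
    have hLtop : L = (n:ℝ) • 1 - J := by rw [← hLLc, hLc0, add_zero]
    have hnLp : (n:ℝ) • Lp = P := by
      rw [hPdef, hLtop, Matrix.sub_mul, Matrix.smul_mul, Matrix.one_mul, hJLp, sub_zero]
    have hLp_eq : Lp = (n:ℝ)⁻¹ • P := by
      rw [← hnLp, smul_smul, inv_mul_cancel₀ (ne_of_gt hn0), one_smul]
    have htr2 : (Lp * Lp).trace = (n:ℝ)⁻¹ * (n:ℝ)⁻¹ * ((n:ℝ) - 1) := by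
      rw [hLp_eq, Matrix.smul_mul, Matrix.mul_smul, hPP, smul_smul, Matrix.trace_smul,
        hTrP, smul_eq_mul]
    rw [hBval, htr2]
    field_simp
end

section
/- Let G be a finite simple graph on n vertices with Laplacian matrix L(G), and let z_1, …, z_n be an orthonormal basis of ℝ^n with z_1 = (1/√n)·𝟏 and L(G) z_k = λ_k z_k for each k, where λ_1 = 0 ≤ λ_2 ≤ … ≤ λ_n. If the complement graph G^c is connected, then for any two vertices u and v, the biharmonic distance in G^c satisfies d_B(u,v) = ( Σ_{k=2}^{n} (n − λ_k)^{-2} (z_k(u) − z_k(v))² )^{1/2}. -/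
open Matrix Finset

lemma pinv_unique' {m : Type*} [Fintype m] [DecidableEq m] (A X Y : Matrix m m ℝ)
    (hx1 : A * X * A = A) (hx2 : X * A * X = X)
    (hx3 : (A * X)ᵀ = A * X) (hx4 : (X * A)ᵀ = X * A)
    (hy1 : A * Y * A = A) (hy2 : Y * A * Y = Y)
    (hy3 : (A * Y)ᵀ = A * Y) (hy4 : (Y * A)ᵀ = Y * A) : X = Y := by
  have hAX : A * X = A * Y := by
    calc A * X = (A * X)ᵀ := hx3.symm
      _ = Xᵀ * Aᵀ := by rw [Matrix.transpose_mul]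
      _ = Xᵀ * (A * Y * A)ᵀ := by rw [hy1]
      _ = Xᵀ * (Aᵀ * Yᵀ * Aᵀ) := by simp only [Matrix.transpose_mul, Matrix.mul_assoc]
      _ = (Xᵀ * Aᵀ) * (Yᵀ * Aᵀ) := by simp only [Matrix.mul_assoc]
      _ = (A * X)ᵀ * (A * Y)ᵀ := by simp only [Matrix.transpose_mul]
      _ = (A * X) * (A * Y) := by rw [hx3, hy3]
      _ = (A * X * A) * Y := by simp only [Matrix.mul_assoc]
      _ = A * Y := by rw [hx1]
  have hXA : X * A = Y * A := by
    calc X * A = (X * A)ᵀ := hx4.symm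
      _ = Aᵀ * Xᵀ := by rw [Matrix.transpose_mul]
      _ = (A * Y * A)ᵀ * Xᵀ := by rw [hy1]
      _ = (Aᵀ * Yᵀ * Aᵀ) * Xᵀ := by simp only [Matrix.transpose_mul, Matrix.mul_assoc]
      _ = (Aᵀ * Yᵀ) * (Aᵀ * Xᵀ) := by simp only [Matrix.mul_assoc]
      _ = (Y * A)ᵀ * (X * A)ᵀ := by simp only [Matrix.transpose_mul]
      _ = (Y * A) * (X * A) := by rw [hx4, hy4]
      _ = Y * (A * X * A) := by simp only [Matrix.mul_assoc]
      _ = Y * A := by rw [hx1]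
  calc X = X * A * X := hx2.symm
    _ = X * A * Y := by rw [Matrix.mul_assoc, hAX, ← Matrix.mul_assoc]
    _ = Y * A * Y := by rw [hXA]
    _ = Y := hy2

/-- Biharmonic distance in the complement: if `G` is a graph
on `n` vertices with orthonormal Laplacian eigenbasis `z` and increasingly
listed eigenvalues `lam` (with `lam 0 = 0` and `z 0 = (1/√n)·𝟏`), and the
complement `Gᶜ` is connected, then the biharmonic distance in `Gᶜ` between `u`
and `v` is `(∑_{k ≠ 0} (n − lam k)⁻² (z k u − z k v)²)^{1/2}`. -/
theorem biharmonic_distance_complement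
    {V : Type*} [Fintype V] [DecidableEq V] {n : ℕ}
    (G : SimpleGraph V) [DecidableRel G.Adj]
    (hn : Fintype.card V = n)
    (hGc : (Gᶜ).Connected)
    (Lp : Matrix V V ℝ)
    (hp1 : (Gᶜ).lapMatrix ℝ * Lp * (Gᶜ).lapMatrix ℝ = (Gᶜ).lapMatrix ℝ)
    (hp2 : Lp * (Gᶜ).lapMatrix ℝ * Lp = Lp)
    (hp3 : ((Gᶜ).lapMatrix ℝ * Lp)ᵀ = (Gᶜ).lapMatrix ℝ * Lp)
    (hp4 : (Lp * (Gᶜ).lapMatrix ℝ)ᵀ = Lp * (Gᶜ).lapMatrix ℝ)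
    (lam : Fin n → ℝ) (z : Fin n → V → ℝ)
    (horth : ∀ i j, ∑ w, z i w * z j w = if i = j then 1 else 0)
    (heig : ∀ k, G.lapMatrix ℝ *ᵥ z k = lam k • z k)
    (hmono : Monotone lam)
    (h0 : lam ⟨0, by rw [← hn]; have := hGc.nonempty; exact Fintype.card_pos⟩ = 0)
    (hz1 : z ⟨0, by rw [← hn]; have := hGc.nonempty; exact Fintype.card_pos⟩
            = fun _ => 1 / Real.sqrt n)
    (u v : V) :
    Real.sqrt ((Lp * Lp) u u + (Lp * Lp) v v - 2 * (Lp * Lp) u v)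
      = Real.sqrt (∑ k ∈ Finset.univ.erase
          ⟨0, by rw [← hn]; have := hGc.nonempty; exact Fintype.card_pos⟩,
          (((n : ℝ) - lam k) ^ 2)⁻¹ * (z k u - z k v) ^ 2) := by
  classical
  haveI : Nonempty V := hGc.nonempty
  have hnpos : 0 < n := by rw [← hn]; exact Fintype.card_pos
  set i0 : Fin n := ⟨0, hnpos⟩ with hi0def
  have h0' : lam i0 = 0 := h0
  have hz1' : z i0 = fun _ => 1 / Real.sqrt n := hz1
  set A : Matrix V V ℝ := (Gᶜ).lapMatrix ℝ with hAdef
  set Z : Matrix (Fin n) V ℝ := Matrix.of (fun k w => z k w) with hZdef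
  -- rows orthonormal
  have hZZ : Z * Zᵀ = 1 := by
    ext i j
    simp only [Matrix.mul_apply, hZdef, Matrix.of_apply, Matrix.transpose_apply,
      Matrix.one_apply]
    exact horth i j
  have hZZ' : Zᵀ * Z = 1 := by
    have e : Fin n ≃ V := (Fintype.equivFinOfCardEq hn).symm
    exact (Matrix.mul_eq_one_comm_of_equiv e).mp hZZ
  -- entries of spectral-form matrices
  have hSapp : ∀ (c : Fin n → ℝ) (a b : V),
      (Zᵀ * Matrix.diagonal c * Z) a b = ∑ k, c k * (z k a * z k b) := by
    intro c a b
    rw [Matrix.mul_apply]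
    refine Finset.sum_congr rfl fun k _ => ?_
    rw [Matrix.mul_diagonal]
    simp only [hZdef, Matrix.transpose_apply, Matrix.of_apply]
    ring
  have hsym : ∀ c : Fin n → ℝ, (Zᵀ * Matrix.diagonal c * Z)ᵀ = Zᵀ * Matrix.diagonal c * Z := by
    intro c
    simp [Matrix.transpose_mul, Matrix.diagonal_transpose, Matrix.mul_assoc]
  have hSmul : ∀ c d : Fin n → ℝ,
      (Zᵀ * Matrix.diagonal c * Z) * (Zᵀ * Matrix.diagonal d * Z)
        = Zᵀ * Matrix.diagonal (fun k => c k * d k) * Z := by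
    intro c d
    calc (Zᵀ * Matrix.diagonal c * Z) * (Zᵀ * Matrix.diagonal d * Z)
        = Zᵀ * Matrix.diagonal c * ((Z * Zᵀ) * (Matrix.diagonal d * Z)) := by
          simp only [Matrix.mul_assoc]
      _ = Zᵀ * Matrix.diagonal (fun k => c k * d k) * Z := by
          rw [hZZ, Matrix.one_mul, ← Matrix.mul_assoc,
            Matrix.mul_assoc Zᵀ (Matrix.diagonal c) (Matrix.diagonal d),
            Matrix.diagonal_mul_diagonal]
  -- sum of row entries vanishes for k ≠ i0
  have hsqn : (0:ℝ) < Real.sqrt n := Real.sqrt_pos.mpr (by exact_mod_cast hnpos)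
  have hsumz : ∀ k, k ≠ i0 → ∑ w, z k w = 0 := by
    intro k hk
    have h := horth k i0
    rw [if_neg hk, hz1'] at h
    rw [← Finset.sum_mul] at h
    rcases mul_eq_zero.mp h with h' | h'
    · exact h'
    · exfalso; rw [one_div] at h'; exact (inv_ne_zero (ne_of_gt hsqn)) h'
  -- complement Laplacian formula
  have hLcompl : A = (n:ℝ) • (1 : Matrix V V ℝ) - Matrix.of (fun _ _ => (1:ℝ))
      - G.lapMatrix ℝ := by
    ext i j
    simp only [hAdef, SimpleGraph.lapMatrix, Matrix.sub_apply, SimpleGraph.degMatrix,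
      SimpleGraph.adjMatrix, Matrix.of_apply, Matrix.smul_apply, Matrix.one_apply,
      smul_eq_mul]
    by_cases hij : i = j
    · subst hij
      have hirr : ¬ G.Adj i i := G.irrefl
      have hirr' : ¬ (Gᶜ).Adj i i := (Gᶜ).irrefl
      simp only [if_pos rfl, if_neg hirr, if_neg hirr', Matrix.diagonal_apply_eq]
      have hlt : G.degree i < n := by rw [← hn]; exact G.degree_lt_card_verts i
      have h1 : (Gᶜ).degree i = n - 1 - G.degree i := by
        rw [SimpleGraph.degree_compl, hn]
      rw [h1, Nat.cast_sub (by omega), Nat.cast_sub (by omega)]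
      push_cast
      ring
    · have h2 : (Gᶜ).Adj i j ↔ ¬ G.Adj i j := by
        rw [SimpleGraph.compl_adj]
        exact ⟨fun h => h.2, fun h => ⟨hij, h⟩⟩
      simp only [if_neg hij, Matrix.diagonal_apply_ne _ hij]
      by_cases ha : G.Adj i j
      · rw [if_pos ha, if_neg (fun h => (h2.mp h) ha)]
        ring
      · rw [if_neg ha, if_pos (h2.mpr ha)]
        ring
  -- eigenvalues in the complement
  have heigA : ∀ k, A *ᵥ z k = (if k = i0 then 0 else ((n:ℝ) - lam k)) • z k := by
    intro k
    rw [hLcompl, Matrix.sub_mulVec, Matrix.sub_mulVec, Matrix.smul_mulVec,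
      Matrix.one_mulVec, heig k]
    by_cases hk : k = i0
    · subst hk
      rw [if_pos rfl, h0', hz1']
      funext w
      simp only [Pi.sub_apply, Pi.smul_apply, smul_eq_mul, zero_smul, zero_mul,
        Matrix.mulVec, dotProduct, Matrix.of_apply, one_mul]
      rw [Finset.sum_const, Finset.card_univ, hn, nsmul_eq_mul]
      simp only [Pi.zero_apply]
      ring
    · rw [if_neg hk]
      funext w
      simp only [Pi.sub_apply, Pi.smul_apply, smul_eq_mul,
        Matrix.mulVec, dotProduct, Matrix.of_apply, one_mul]
      rw [hsumz k hk]
      ring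
  -- nonvanishing of n - lam k for k ≠ i0
  have hne0 : ∀ k, k ≠ i0 → (n:ℝ) - lam k ≠ 0 := by
    intro k hk hzero
    have h1 : A *ᵥ z k = 0 := by rw [heigA k, if_neg hk, hzero, zero_smul]
    have h2 : ∀ i j, (Gᶜ).Reachable i j → z k i = z k j := by
      rw [← SimpleGraph.lapMatrix_mulVec_eq_zero_iff_forall_reachable]
      exact h1
    obtain ⟨w0⟩ := ‹Nonempty V›
    have hconst : ∀ w, z k w = z k w0 := fun w => h2 w w0 (hGc.preconnected w w0)
    have hs := hsumz k hk
    have hsum0 : (n:ℝ) * z k w0 = 0 := by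
      rw [← hs]
      rw [Finset.sum_congr rfl (fun w _ => hconst w), Finset.sum_const,
        Finset.card_univ, hn, nsmul_eq_mul]
    have hc0 : z k w0 = 0 := by
      rcases mul_eq_zero.mp hsum0 with h' | h'
      · exact absurd h' (by exact_mod_cast hnpos.ne')
      · exact h'
    have hnorm := horth k k
    rw [if_pos rfl] at hnorm
    have : ∑ w, z k w * z k w = 0 := by
      apply Finset.sum_eq_zero
      intro w _
      rw [hconst w, hc0, mul_zero]
    rw [this] at hnorm
    exact zero_ne_one hnorm
  -- spectral decomposition of A
  set mu : Fin n → ℝ := fun k => if k = i0 then 0 else (n:ℝ) - lam k with hmudef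
  set nu : Fin n → ℝ := fun k => if k = i0 then 0 else ((n:ℝ) - lam k)⁻¹ with hnudef
  have hA : A = Zᵀ * Matrix.diagonal mu * Z := by
    have h1 : A * Zᵀ = Zᵀ * Matrix.diagonal mu := by
      ext a k
      have h2 := congrFun (heigA k) a
      simp only [Pi.smul_apply, smul_eq_mul, Matrix.mulVec, dotProduct] at h2
      calc (A * Zᵀ) a k = ∑ w, A a w * z k w := by
            simp only [Matrix.mul_apply, hZdef, Matrix.transpose_apply, Matrix.of_apply]
        _ = (if k = i0 then 0 else ((n:ℝ) - lam k)) * z k a := h2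
        _ = (Zᵀ * Matrix.diagonal mu) a k := by
            rw [Matrix.mul_diagonal]
            simp only [hZdef, hmudef, Matrix.transpose_apply, Matrix.of_apply]
            ring
    calc A = A * (Zᵀ * Z) := by rw [hZZ', Matrix.mul_one]
      _ = (A * Zᵀ) * Z := by rw [Matrix.mul_assoc]
      _ = Zᵀ * Matrix.diagonal mu * Z := by rw [h1]
  -- the candidate pseudoinverse
  set M : Matrix V V ℝ := Zᵀ * Matrix.diagonal nu * Z with hMdef
  have hmunu : (fun k => mu k * nu k) = fun k => if k = i0 then 0 else 1 := by
    funext k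
    by_cases hk : k = i0
    · simp [hmudef, hnudef, hk]
    · simp only [hmudef, hnudef, if_neg hk]
      exact mul_inv_cancel₀ (hne0 k hk)
  have hnumu : (fun k => nu k * mu k) = fun k => if k = i0 then 0 else 1 := by
    funext k
    rw [mul_comm]
    exact congrFun hmunu k
  have hMp1 : A * M * A = A := by
    rw [hA, hMdef, hSmul, hSmul]
    have hfun : (fun k => mu k * nu k * mu k) = mu := by
      funext k
      by_cases hk : k = i0
      · simp [hmudef, hnudef, hk]
      · simp only [hmudef, hnudef, if_neg hk]
        rw [mul_inv_cancel₀ (hne0 k hk), one_mul]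
    rw [hfun]
  have hMp2 : M * A * M = M := by
    rw [hA, hMdef, hSmul, hSmul]
    have hfun : (fun k => nu k * mu k * nu k) = nu := by
      funext k
      by_cases hk : k = i0
      · simp [hmudef, hnudef, hk]
      · simp only [hmudef, hnudef, if_neg hk]
        rw [inv_mul_cancel₀ (hne0 k hk), one_mul]
    rw [hfun]
  have hMp3 : (A * M)ᵀ = A * M := by
    rw [hA, hMdef, hSmul]; exact hsym _
  have hMp4 : (M * A)ᵀ = M * A := by
    rw [hA, hMdef, hSmul]; exact hsym _
  -- identify Lp with M
  have hLpM : Lp = M := pinv_unique' A Lp M hp1 hp2 hp3 hp4 hMp1 hMp2 hMp3 hMp4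
  have hLpLp : Lp * Lp = Zᵀ * Matrix.diagonal (fun k => nu k * nu k) * Z := by
    rw [hLpM, hMdef, hSmul]
  have key : (Lp * Lp) u u + (Lp * Lp) v v - 2 * (Lp * Lp) u v
      = ∑ k ∈ Finset.univ.erase i0, (((n : ℝ) - lam k) ^ 2)⁻¹ * (z k u - z k v) ^ 2 := by
    rw [hLpLp, hSapp, hSapp, hSapp]
    have h1 : ∑ k, (nu k * nu k) * (z k u * z k u)
        + ∑ k, (nu k * nu k) * (z k v * z k v)
        - 2 * ∑ k, (nu k * nu k) * (z k u * z k v)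
        = ∑ k, (nu k * nu k) * (z k u - z k v) ^ 2 := by
      rw [Finset.mul_sum, ← Finset.sum_add_distrib, ← Finset.sum_sub_distrib]
      exact Finset.sum_congr rfl fun k _ => by ring
    rw [h1]
    have hzero : (nu i0 * nu i0) * (z i0 u - z i0 v) ^ 2 = 0 := by simp [hnudef]
    rw [← Finset.sum_erase (f := fun k => (nu k * nu k) * (z k u - z k v) ^ 2)
      (a := i0) Finset.univ hzero]
    refine Finset.sum_congr rfl fun k hk => ?_
    have hk' : k ≠ i0 := Finset.ne_of_mem_erase hk
    simp only [hnudef, if_neg hk']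
    rw [← mul_inv, ← sq]
  exact congrArg Real.sqrt key
end

section
/- Let G_1 and G_2 be finite connected simple graphs on n_1 and n_2 vertices, with orthonormal bases z_1(G_t), …, z_{n_t}(G_t) of eigenvectors of the Laplacian L(G_t) satisfying L(G_t) z_i(G_t) = λ_i(G_t) z_i(G_t), z_1(G_t) = (1/√{n_t})·𝟏 and λ_1(G_t) = 0 < λ_2(G_t) ≤ … ≤ λ_{n_t}(G_t), for t = 1, 2. Then the biharmonic distance in the Cartesian product G_1 □ G_2 between vertices (u_1,u_2) and (v_1,v_2) equals ( Σ_{(i,j) ≠ (1,1)} (λ_i(G_1) + λ_j(G_2))^{-2} · ( (z_i(G_1) ⊗ z_j(G_2))(u_1,u_2) − (z_i(G_1) ⊗ z_j(G_2))(v_1,v_2) )² )^{1/2}, where the sum runs over all pairs (i,j) with 1 ≤ i ≤ n_1, 1 ≤ j ≤ n_2, (i,j) ≠ (1,1). -/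
open Matrix Finset


lemma lap_mulVec {V : Type*} [Fintype V] [DecidableEq V] (G : SimpleGraph V)
    [DecidableRel G.Adj] (f : V → ℝ) (a : V) :
    (G.lapMatrix ℝ *ᵥ f) a = ∑ c, if G.Adj a c then f a - f c else 0 := by
  rw [SimpleGraph.lapMatrix_mulVec_apply]
  have : ∑ c, (if G.Adj a c then f a - f c else 0)
      = ∑ c ∈ G.neighborFinset a, (f a - f c) := by
    rw [SimpleGraph.neighborFinset_eq_filter, Finset.sum_filter]
  rw [this, Finset.sum_sub_distrib, Finset.sum_const, nsmul_eq_mul]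
  rfl

lemma boxLap {V₁ V₂ : Type*} [Fintype V₁] [DecidableEq V₁] [Fintype V₂] [DecidableEq V₂]
    (G₁ : SimpleGraph V₁) [DecidableRel G₁.Adj] (G₂ : SimpleGraph V₂) [DecidableRel G₂.Adj]
    [DecidableRel (G₁ □ G₂).Adj] (f : V₁ → ℝ) (g : V₂ → ℝ) (a : V₁) (b : V₂) :
    ((G₁ □ G₂).lapMatrix ℝ *ᵥ fun w => f w.1 * g w.2) (a, b)
      = (G₁.lapMatrix ℝ *ᵥ f) a * g b + f a * (G₂.lapMatrix ℝ *ᵥ g) b := by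
  rw [lap_mulVec, lap_mulVec, lap_mulVec, Fintype.sum_prod_type]
  have key : ∀ (c : V₁) (d : V₂),
      (if (G₁ □ G₂).Adj (a, b) (c, d) then f a * g b - f c * g d else 0)
        = (if b = d then if G₁.Adj a c then f a * g b - f c * g d else 0 else 0)
          + (if a = c then if G₂.Adj b d then f a * g b - f c * g d else 0 else 0) := by
    intro c d
    by_cases h1 : G₁.Adj a c <;> by_cases h2 : G₂.Adj b d <;>
      by_cases h3 : b = d <;> by_cases h4 : a = c <;>
      first
      | (subst_vars; simp_all [SimpleGraph.boxProd_adj])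
      | simp_all [SimpleGraph.boxProd_adj]
  simp_rw [key, Finset.sum_add_distrib]
  congr 1
  · simp_rw [Finset.sum_ite_eq, Finset.mem_univ, if_true]
    rw [Finset.sum_mul]
    refine Finset.sum_congr rfl fun c _ => ?_
    by_cases h : G₁.Adj a c <;> simp [h] <;> ring
  · rw [Finset.sum_comm]
    simp_rw [Finset.sum_ite_eq, Finset.mem_univ, if_true]
    rw [Finset.mul_sum]
    refine Finset.sum_congr rfl fun d _ => ?_
    by_cases h : G₂.Adj b d <;> simp [h] <;> ring

lemma penrose_unique {n : Type*} [Fintype n] (A B C : Matrix n n ℝ)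
    (hB1 : A * B * A = A) (hB2 : B * A * B = B)
    (hB3 : (A * B)ᵀ = A * B) (hB4 : (B * A)ᵀ = B * A)
    (hC1 : A * C * A = A) (hC2 : C * A * C = C)
    (hC3 : (A * C)ᵀ = A * C) (hC4 : (C * A)ᵀ = C * A) : B = C := by
  have hAB : A * B = Bᵀ * Aᵀ := by rw [← Matrix.transpose_mul]; exact hB3.symm
  have hAC : A * C = Cᵀ * Aᵀ := by rw [← Matrix.transpose_mul]; exact hC3.symm
  have hBA : B * A = Aᵀ * Bᵀ := by rw [← Matrix.transpose_mul]; exact hB4.symm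
  have hCA : C * A = Aᵀ * Cᵀ := by rw [← Matrix.transpose_mul]; exact hC4.symm
  have hAt1 : Aᵀ = Aᵀ * Cᵀ * Aᵀ := by
    conv_lhs => rw [← hC1]
    simp [Matrix.transpose_mul, Matrix.mul_assoc]
  have hAt2 : Aᵀ = Aᵀ * Bᵀ * Aᵀ := by
    conv_lhs => rw [← hB1]
    simp [Matrix.transpose_mul, Matrix.mul_assoc]
  have key1 : B = B * A * C := by
    calc B = B * A * B := hB2.symm
    _ = B * (A * B) := by rw [Matrix.mul_assoc]
    _ = B * (Bᵀ * Aᵀ) := by rw [hAB]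
    _ = B * (Bᵀ * (Aᵀ * Cᵀ * Aᵀ)) := by rw [← hAt1]
    _ = B * (Bᵀ * Aᵀ) * (Cᵀ * Aᵀ) := by simp only [Matrix.mul_assoc]
    _ = B * (A * B) * (Cᵀ * Aᵀ) := by rw [← hAB]
    _ = B * A * B * (Cᵀ * Aᵀ) := by simp only [Matrix.mul_assoc]
    _ = B * (Cᵀ * Aᵀ) := by rw [hB2]
    _ = B * (A * C) := by rw [← hAC]
    _ = B * A * C := by rw [Matrix.mul_assoc]
  have key2 : C = B * A * C := by
    calc C = C * A * C := hC2.symm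
    _ = Aᵀ * Cᵀ * C := by rw [← hCA]
    _ = Aᵀ * Bᵀ * Aᵀ * Cᵀ * C := by rw [← hAt2]
    _ = Aᵀ * Bᵀ * (Aᵀ * Cᵀ) * C := by simp only [Matrix.mul_assoc]
    _ = B * A * (C * A) * C := by rw [← hBA, ← hCA]
    _ = B * A * (C * A * C) := by simp only [Matrix.mul_assoc]
    _ = B * A * C := by rw [hC2]
  rw [key1, ← key2]

/-- Biharmonic distance in a Cartesian (box) product: with
orthonormal Laplacian eigenbases `z₁, z₂` and increasingly listed eigenvalues
`lam₁, lam₂` of connected graphs `G₁, G₂` (first eigenvalue `0`, first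
eigenvector the normalized all-ones vector), the biharmonic distance in
`G₁ □ G₂` between `(u₁,u₂)` and `(v₁,v₂)` is
`(∑_{(i,j)≠(0,0)} (lam₁ i + lam₂ j)⁻² ((z₁ i ⊗ z₂ j)(u₁,u₂) − (z₁ i ⊗ z₂ j)(v₁,v₂))²)^{1/2}`. -/
theorem biharmonic_distance_boxProd
    {V₁ V₂ : Type*} [Fintype V₁] [DecidableEq V₁] [Fintype V₂] [DecidableEq V₂]
    {n₁ n₂ : ℕ}
    (G₁ : SimpleGraph V₁) [DecidableRel G₁.Adj] (hG₁ : G₁.Connected)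
    (G₂ : SimpleGraph V₂) [DecidableRel G₂.Adj] (hG₂ : G₂.Connected)
    [DecidableRel (G₁ □ G₂).Adj]
    (hn₁ : Fintype.card V₁ = n₁) (hn₂ : Fintype.card V₂ = n₂)
    (Lp : Matrix (V₁ × V₂) (V₁ × V₂) ℝ)
    (hp1 : (G₁ □ G₂).lapMatrix ℝ * Lp * (G₁ □ G₂).lapMatrix ℝ = (G₁ □ G₂).lapMatrix ℝ)
    (hp2 : Lp * (G₁ □ G₂).lapMatrix ℝ * Lp = Lp)
    (hp3 : ((G₁ □ G₂).lapMatrix ℝ * Lp)ᵀ = (G₁ □ G₂).lapMatrix ℝ * Lp)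
    (hp4 : (Lp * (G₁ □ G₂).lapMatrix ℝ)ᵀ = Lp * (G₁ □ G₂).lapMatrix ℝ)
    (lam₁ : Fin n₁ → ℝ) (z₁ : Fin n₁ → V₁ → ℝ)
    (horth₁ : ∀ i j, ∑ w, z₁ i w * z₁ j w = if i = j then 1 else 0)
    (heig₁ : ∀ k, G₁.lapMatrix ℝ *ᵥ z₁ k = lam₁ k • z₁ k)
    (hmono₁ : Monotone lam₁)
    (h0₁ : lam₁ ⟨0, by rw [← hn₁]; have := hG₁.nonempty; exact Fintype.card_pos⟩ = 0)
    (hpos₁ : ∀ k : Fin n₁,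
      k ≠ ⟨0, by rw [← hn₁]; have := hG₁.nonempty; exact Fintype.card_pos⟩ → 0 < lam₁ k)
    (hz₁ : z₁ ⟨0, by rw [← hn₁]; have := hG₁.nonempty; exact Fintype.card_pos⟩
            = fun _ => 1 / Real.sqrt n₁)
    (lam₂ : Fin n₂ → ℝ) (z₂ : Fin n₂ → V₂ → ℝ)
    (horth₂ : ∀ i j, ∑ w, z₂ i w * z₂ j w = if i = j then 1 else 0)
    (heig₂ : ∀ k, G₂.lapMatrix ℝ *ᵥ z₂ k = lam₂ k • z₂ k)
    (hmono₂ : Monotone lam₂)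
    (h0₂ : lam₂ ⟨0, by rw [← hn₂]; have := hG₂.nonempty; exact Fintype.card_pos⟩ = 0)
    (hpos₂ : ∀ k : Fin n₂,
      k ≠ ⟨0, by rw [← hn₂]; have := hG₂.nonempty; exact Fintype.card_pos⟩ → 0 < lam₂ k)
    (hz₂ : z₂ ⟨0, by rw [← hn₂]; have := hG₂.nonempty; exact Fintype.card_pos⟩
            = fun _ => 1 / Real.sqrt n₂)
    (u₁ v₁ : V₁) (u₂ v₂ : V₂) :
    Real.sqrt ((Lp * Lp) (u₁, u₂) (u₁, u₂) + (Lp * Lp) (v₁, v₂) (v₁, v₂)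
        - 2 * (Lp * Lp) (u₁, u₂) (v₁, v₂))
      = Real.sqrt (∑ p ∈ Finset.univ.erase
          (⟨0, by rw [← hn₁]; have := hG₁.nonempty; exact Fintype.card_pos⟩,
           ⟨0, by rw [← hn₂]; have := hG₂.nonempty; exact Fintype.card_pos⟩),
          ((lam₁ p.1 + lam₂ p.2) ^ 2)⁻¹
            * (z₁ p.1 u₁ * z₂ p.2 u₂ - z₁ p.1 v₁ * z₂ p.2 v₂) ^ 2) := by
  have hc₁ : 0 < n₁ := by rw [← hn₁]; have := hG₁.nonempty; exact Fintype.card_pos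
  have hc₂ : 0 < n₂ := by rw [← hn₂]; have := hG₂.nonempty; exact Fintype.card_pos
  set p₀ : Fin n₁ × Fin n₂ := (⟨0, hc₁⟩, ⟨0, hc₂⟩) with hp₀
  set L : Matrix (V₁ × V₂) (V₁ × V₂) ℝ := (G₁ □ G₂).lapMatrix ℝ with hLdef
  set Z : Matrix (V₁ × V₂) (Fin n₁ × Fin n₂) ℝ :=
    Matrix.of fun w p => z₁ p.1 w.1 * z₂ p.2 w.2 with hZdef
  set μ : Fin n₁ × Fin n₂ → ℝ := fun p => lam₁ p.1 + lam₂ p.2 with hμdef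
  -- orthonormality of the product family
  have hZtZ : Zᵀ * Z = 1 := by
    ext p q
    rw [Matrix.mul_apply]
    simp only [Matrix.transpose_apply, hZdef, Matrix.of_apply]
    rw [Fintype.sum_prod_type]
    have : ∀ a : V₁, ∑ b : V₂, (z₁ p.1 a * z₂ p.2 b) * (z₁ q.1 a * z₂ q.2 b)
        = (z₁ p.1 a * z₁ q.1 a) * ∑ b, z₂ p.2 b * z₂ q.2 b := by
      intro a
      rw [Finset.mul_sum]
      exact Finset.sum_congr rfl fun b _ => by ring
    simp_rw [this, horth₂, ← Finset.sum_mul, horth₁]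
    by_cases h1 : p.1 = q.1 <;> by_cases h2 : p.2 = q.2 <;>
      simp [Matrix.one_apply, Prod.ext_iff, h1, h2]
  have e : (V₁ × V₂) ≃ (Fin n₁ × Fin n₂) := by
    apply Fintype.equivOfCardEq
    simp [Fintype.card_prod, hn₁, hn₂]
  have hZZt : Z * Zᵀ = 1 := (Matrix.mul_eq_one_comm_of_equiv e).mpr hZtZ
  have hLZ : L * Z = Z * Matrix.diagonal μ := by
    ext w p
    have h1 : (L * Z) w p = (L *ᵥ fun w' => z₁ p.1 w'.1 * z₂ p.2 w'.2) w := rfl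
    obtain ⟨a, b⟩ := w
    rw [h1, hLdef, boxLap, heig₁, heig₂]
    simp only [Matrix.mul_diagonal, Pi.smul_apply, smul_eq_mul, hZdef, Matrix.of_apply, hμdef]
    ring
  have hL : L = Z * Matrix.diagonal μ * Zᵀ := by
    calc L = L * (Z * Zᵀ) := by rw [hZZt, Matrix.mul_one]
    _ = (L * Z) * Zᵀ := by rw [Matrix.mul_assoc]
    _ = Z * Matrix.diagonal μ * Zᵀ := by rw [hLZ]
  have hsand : ∀ d e : (Fin n₁ × Fin n₂) → ℝ,
      (Z * Matrix.diagonal d * Zᵀ) * (Z * Matrix.diagonal e * Zᵀ)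
        = Z * Matrix.diagonal (fun p => d p * e p) * Zᵀ := by
    intro d e
    have : (Z * Matrix.diagonal d * Zᵀ) * (Z * Matrix.diagonal e * Zᵀ)
        = Z * (Matrix.diagonal d * ((Zᵀ * Z) * (Matrix.diagonal e * Zᵀ))) := by
      simp only [Matrix.mul_assoc]
    rw [this, hZtZ, Matrix.one_mul, ← Matrix.mul_assoc (Matrix.diagonal d) (Matrix.diagonal e) Zᵀ,
      Matrix.diagonal_mul_diagonal, ← Matrix.mul_assoc]
  have hsymm : ∀ d : (Fin n₁ × Fin n₂) → ℝ,
      (Z * Matrix.diagonal d * Zᵀ)ᵀ = Z * Matrix.diagonal d * Zᵀ := by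
    intro d
    rw [Matrix.transpose_mul, Matrix.transpose_mul, Matrix.transpose_transpose,
      Matrix.diagonal_transpose, Matrix.mul_assoc]
  set M : Matrix (V₁ × V₂) (V₁ × V₂) ℝ :=
    Z * Matrix.diagonal (fun p => (μ p)⁻¹) * Zᵀ with hMdef
  have habc : ∀ a : ℝ, a * a⁻¹ * a = a := by
    intro a
    rcases eq_or_ne a 0 with h | h
    · simp [h]
    · field_simp
  have hm1 : L * M * L = L := by
    rw [hL, hMdef, hsand, hsand]
    congr 1
    congr 1
    exact congrArg Matrix.diagonal (funext fun p => habc (μ p))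
  have hm2 : M * L * M = M := by
    rw [hL, hMdef, hsand, hsand]
    congr 1
    congr 1
    refine congrArg Matrix.diagonal (funext fun p => ?_)
    rcases eq_or_ne (μ p) 0 with h | h
    · simp [h]
    · field_simp
  have hm3 : (L * M)ᵀ = L * M := by rw [hL, hMdef, hsand]; exact hsymm _
  have hm4 : (M * L)ᵀ = M * L := by rw [hL, hMdef, hsand]; exact hsymm _
  have hLpM : Lp = M := penrose_unique L Lp M hp1 hp2 hp3 hp4 hm1 hm2 hm3 hm4
  have hLpLp : Lp * Lp = Z * Matrix.diagonal (fun p => (μ p)⁻¹ * (μ p)⁻¹) * Zᵀ := by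
    rw [hLpM, hMdef, hsand]
  have hentry : ∀ w w' : V₁ × V₂,
      (Z * Matrix.diagonal (fun p => (μ p)⁻¹ * (μ p)⁻¹) * Zᵀ) w w'
        = ∑ p, ((μ p)⁻¹ * (μ p)⁻¹) * (Z w p * Z w' p) := by
    intro w w'
    rw [Matrix.mul_apply]
    refine Finset.sum_congr rfl fun p _ => ?_
    rw [Matrix.mul_diagonal, Matrix.transpose_apply]
    ring
  congr 1
  rw [hLpLp, hentry, hentry, hentry]
  have hstep : ∀ w w' : V₁ × V₂, Z w p₀ = Z w' p₀ := by
    intro w w'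
    simp only [hZdef, Matrix.of_apply, hp₀, hz₁, hz₂]
  have hcomb : (∑ p, ((μ p)⁻¹ * (μ p)⁻¹) * (Z (u₁, u₂) p * Z (u₁, u₂) p))
      + (∑ p, ((μ p)⁻¹ * (μ p)⁻¹) * (Z (v₁, v₂) p * Z (v₁, v₂) p))
      - 2 * (∑ p, ((μ p)⁻¹ * (μ p)⁻¹) * (Z (u₁, u₂) p * Z (v₁, v₂) p))
      = ∑ p, ((μ p) ^ 2)⁻¹ * (Z (u₁, u₂) p - Z (v₁, v₂) p) ^ 2 := by
    rw [Finset.mul_sum, ← Finset.sum_add_distrib, ← Finset.sum_sub_distrib]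
    refine Finset.sum_congr rfl fun p _ => ?_
    rw [sq (μ p), mul_inv]
    ring
  rw [hcomb]
  rw [← Finset.add_sum_erase _ _ (Finset.mem_univ p₀)]
  have h0 : ((μ p₀) ^ 2)⁻¹ * (Z (u₁, u₂) p₀ - Z (v₁, v₂) p₀) ^ 2 = 0 := by
    rw [hstep (u₁, u₂) (v₁, v₂)]
    simp
  rw [h0, zero_add]
  rfl
end
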